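/- arXiv:2104.02351 — 5 statements merged into one kernel-verified Lean document; each statement's English description precedes it below -/
import Mathlib

section
/- Let N ≥ 3 and let u : ℝ^N → ℝ^N be a smooth vector field on ℝ^N ∖ {0} such that x·u(x) = 0 and div u = 0 on ℝ^N ∖ {0}. Then u has zero spherical mean: for every r > 0, the vector-valued integral ∫_{S^{N-1}} u(rσ) dσ equals the zero vector. -/
/-!
Differentiating `x · u(x) = 0` gives `u_j(x) = -∑_k x_k ∂_j u_k(x)`. On the sphere of radius `r`,
`∫ σ_k ∂_j h(rσ) dσ` is symmetric in `j, k`: the difference `σ_k ∂_j h - σ_j ∂_k h` is the derivative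
of `h(r ·)` along the rotations `exp (t A)` of the `(k, j)`-plane, and since these rotations preserve
the surface measure, `t ↦ ∫ h(r exp (t A) σ) dσ` is constant, so the integral of that derivative
vanishes. Hence `∫ u_j(rσ) dσ = -r ∫ σ_j div u(rσ) dσ = 0`.
-/

open MeasureTheory Metric Filter

noncomputable section

/-- The divergence `div u = Σ_k ∂u_k/∂x_k` of a vector field on `ℝ^N`. -/
def divg {N : ℕ} (u : EuclideanSpace ℝ (Fin N) → EuclideanSpace ℝ (Fin N))
    (x : EuclideanSpace ℝ (Fin N)) : ℝ :=
  ∑ k, fderiv ℝ (fun y => u y k) x (EuclideanSpace.single k 1)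

/-- `|∇u|² = Σ_{j,k} (∂u_j/∂x_k)²`. -/
def gradSq {N : ℕ} (u : EuclideanSpace ℝ (Fin N) → EuclideanSpace ℝ (Fin N))
    (x : EuclideanSpace ℝ (Fin N)) : ℝ :=
  ∑ j, ∑ k, (fderiv ℝ (fun y => u y j) x (EuclideanSpace.single k 1)) ^ 2

/-- `u` has finite D-norm: the three integrals in the HUP inequality are finite. -/
def FiniteDNorm {N : ℕ} (u : EuclideanSpace ℝ (Fin N) → EuclideanSpace ℝ (Fin N)) : Prop :=
  Integrable (fun x => ‖u x‖ ^ 2) volume ∧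
    Integrable (fun x => ‖u x‖ ^ 2 * ‖x‖ ^ 2) volume ∧
    Integrable (fun x => gradSq u x) volume

/-- The standard surface measure on the unit sphere `S^{N-1} ⊂ ℝ^N`. -/
def sphereMeasure (N : ℕ) : Measure (sphere (0 : EuclideanSpace ℝ (Fin N)) 1) :=
  (volume : Measure (EuclideanSpace ℝ (Fin N))).toSphere

open Set Function Topology
open scoped Pointwise

section SphereInvariance

variable {E : Type*} [NormedAddCommGroup E] [InnerProductSpace ℝ E] [MeasurableSpace E]
  [BorelSpace E]

def LinearIsometryEquiv.sphereHomeomorph (O : E ≃ₗᵢ[ℝ] E) :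
    sphere (0 : E) 1 ≃ₜ sphere (0 : E) 1 :=
  O.toHomeomorph.subtype fun x => by simp

theorem MeasureTheory.MeasurePreserving.toSphere {μ : Measure E} {O : E ≃ₗᵢ[ℝ] E}
    (hO : MeasurePreserving O μ μ) :
    MeasurePreserving O.sphereHomeomorph μ.toSphere μ.toSphere := by
  have hΦ := O.sphereHomeomorph.continuous.measurable
  refine ⟨hΦ, Measure.ext fun s hs => ?_⟩
  have hval : ((↑) : sphere (0 : E) 1 → E) '' (O.sphereHomeomorph ⁻¹' s) = O ⁻¹' ((↑) '' s) := by
    ext x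
    constructor
    · rintro ⟨σ, hσ, rfl⟩
      exact ⟨_, hσ, rfl⟩
    · rintro ⟨τ, hτ, hx⟩
      exact ⟨O.sphereHomeomorph.symm τ, by simpa using hτ, O.symm_apply_eq.2 hx⟩
  have hsmul : Ioo (0 : ℝ) 1 • O ⁻¹' ((↑) '' s) = O ⁻¹' (Ioo (0 : ℝ) 1 • (↑) '' s) := by
    rw [← O.symm_symm, ← O.symm.image_eq_preimage_symm, ← O.symm.image_eq_preimage_symm,
      ← image2_smul, ← image2_smul, image_image2_distrib_right fun c x => O.symm.map_smul c x]
  rw [Measure.map_apply hΦ hs, Measure.toSphere_apply' _ (hΦ hs), Measure.toSphere_apply' _ hs,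
    hval, hsmul, hO.measure_preimage_emb O.toHomeomorph.measurableEmbedding]

theorem LinearIsometryEquiv.integral_toSphere_comp [FiniteDimensional ℝ E] {F : Type*}
    [NormedAddCommGroup F] [NormedSpace ℝ F] (O : E ≃ₗᵢ[ℝ] E) (f : E → F) :
    ∫ σ : sphere (0 : E) 1, f (O σ) ∂(volume : Measure E).toSphere
      = ∫ σ : sphere (0 : E) 1, f σ ∂(volume : Measure E).toSphere :=
  O.measurePreserving.toSphere.integral_comp O.sphereHomeomorph.measurableEmbedding fun σ => f σ

end SphereInvariance

theorem hasDerivAt_integral_of_compactSpace {X G : Type*} [TopologicalSpace X]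
    [CompactSpace X] [SecondCountableTopology X] [MeasurableSpace X] [OpensMeasurableSpace X]
    {μ : Measure X} [IsFiniteMeasure μ] [NormedAddCommGroup G] [NormedSpace ℝ G]
    {F F' : ℝ → X → G} (hF : ∀ t, Continuous (F t)) (hF' : Continuous (uncurry F'))
    (hderiv : ∀ t a, HasDerivAt (F · a) (F' t a) t) (t₀ : ℝ) :
    HasDerivAt (fun t => ∫ a, F t a ∂μ) (∫ a, F' t₀ a ∂μ) t₀ := by
  obtain ⟨C, hC⟩ := ((isCompact_closedBall t₀ 1).prod isCompact_univ).exists_bound_of_continuousOn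
    hF'.continuousOn
  exact (hasDerivAt_integral_of_dominated_loc_of_deriv_le (bound := fun _ => C)
    (closedBall_mem_nhds t₀ one_pos) (Eventually.of_forall fun t => (hF t).aestronglyMeasurable)
    ((hF t₀).integrable_of_hasCompactSupport (.of_compactSpace _))
    (hF'.comp (Continuous.prodMk_right t₀)).aestronglyMeasurable
    (Eventually.of_forall fun a t ht => hC (t, a) ⟨ht, mem_univ a⟩) (integrable_const C)
    (Eventually.of_forall fun a t _ => hderiv t a)).2

section SkewAdjointFlow

variable {E : Type*} [NormedAddCommGroup E] [InnerProductSpace ℝ E] [CompleteSpace E]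

def skewAdjointFlow (A : skewAdjoint (E →L[ℝ] E)) (t : ℝ) : E ≃ₗᵢ[ℝ] E :=
  Unitary.linearIsometryEquiv ⟨NormedSpace.exp (t • (A : E →L[ℝ] E)), by
    let +nondep : NormedAlgebra ℚ (E →L[ℝ] E) := .restrictScalars ℚ ℝ _
    exact NormedSpace.exp_mem_unitary_of_mem_skewAdjoint (skewAdjoint.smul_mem t A.2)⟩

theorem skewAdjointFlow_apply (A : skewAdjoint (E →L[ℝ] E)) (t : ℝ) (x : E) :
    skewAdjointFlow A t x = NormedSpace.exp (t • (A : E →L[ℝ] E)) x := rfl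

@[simp]
theorem skewAdjointFlow_zero (A : skewAdjoint (E →L[ℝ] E)) (x : E) :
    skewAdjointFlow A 0 x = x := by
  simp [skewAdjointFlow_apply]

theorem hasDerivAt_skewAdjointFlow (A : skewAdjoint (E →L[ℝ] E)) (t : ℝ) (x : E) :
    HasDerivAt (fun s => skewAdjointFlow A s x) ((A : E →L[ℝ] E) (skewAdjointFlow A t x)) t :=
  (ContinuousLinearMap.apply ℝ E x).hasFDerivAt.comp_hasDerivAt t
    (hasDerivAt_exp_smul_const' (𝕂 := ℝ) (A : E →L[ℝ] E) t)

theorem continuous_skewAdjointFlow (A : skewAdjoint (E →L[ℝ] E)) :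
    Continuous fun p : ℝ × E => skewAdjointFlow A p.1 p.2 := by
  have hexp : Continuous fun t : ℝ => NormedSpace.exp (t • (A : E →L[ℝ] E)) :=
    continuous_iff_continuousAt.2 fun t =>
      (hasDerivAt_exp_smul_const' (𝕂 := ℝ) (A : E →L[ℝ] E) t).continuousAt
  exact (hexp.comp continuous_fst).clm_apply continuous_snd

end SkewAdjointFlow

theorem integral_toSphere_fderiv_skewAdjoint {E : Type*} [NormedAddCommGroup E]
    [InnerProductSpace ℝ E] [FiniteDimensional ℝ E] [MeasurableSpace E] [BorelSpace E]
    (A : skewAdjoint (E →L[ℝ] E)) {h : E → ℝ} {U : Set E} (hU : IsOpen U)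
    (hh : ContDiffOn ℝ 1 h U) {r : ℝ} (hr : r ≠ 0) (hrU : ∀ σ ∈ sphere (0 : E) 1, r • σ ∈ U) :
    ∫ σ : sphere (0 : E) 1, fderiv ℝ h (r • (σ : E)) ((A : E →L[ℝ] E) σ)
      ∂(volume : Measure E).toSphere = 0 := by
  set Φ := skewAdjointFlow A
  have hmem (t : ℝ) (σ : sphere (0 : E) 1) : r • Φ t σ ∈ U := hrU _ (by simp)
  set F : ℝ → sphere (0 : E) 1 → ℝ := fun t σ => h (r • Φ t σ)
  set F' : ℝ → sphere (0 : E) 1 → ℝ :=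
    fun t σ => fderiv ℝ h (r • Φ t σ) (r • (A : E →L[ℝ] E) (Φ t σ))
  have hΦ : Continuous fun p : ℝ × sphere (0 : E) 1 => Φ p.1 p.2 :=
    (continuous_skewAdjointFlow A).comp
      (continuous_fst.prodMk (continuous_subtype_val.comp continuous_snd))
  have hF (t : ℝ) : Continuous (F t) :=
    hh.continuousOn.comp_continuous ((hΦ.comp (Continuous.prodMk_right t)).const_smul r)
      (hmem t)
  have hF' : Continuous (uncurry F') :=
    ((hh.continuousOn_fderiv_of_isOpen hU le_rfl).comp_continuous (hΦ.const_smul r)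
      fun p => hmem p.1 p.2).clm_apply ((A.1.continuous.comp hΦ).const_smul r)
  have hderiv (t : ℝ) (σ : sphere (0 : E) 1) : HasDerivAt (F · σ) (F' t σ) t :=
    ((hh.differentiableOn one_ne_zero _ (hmem t σ)).differentiableAt
      (hU.mem_nhds (hmem t σ))).hasFDerivAt.comp_hasDerivAt t
      ((hasDerivAt_skewAdjointFlow A t σ).const_smul r)
  have hinvariant : (fun t => ∫ σ, F t σ ∂(volume : Measure E).toSphere)
      = fun _ => ∫ σ : sphere (0 : E) 1, h (r • (σ : E)) ∂(volume : Measure E).toSphere :=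
    funext fun t => (Φ t).integral_toSphere_comp fun x => h (r • x)
  have hzero : ∫ σ, F' 0 σ ∂(volume : Measure E).toSphere = 0 := by
    have := hasDerivAt_integral_of_compactSpace (μ := (volume : Measure E).toSphere) hF hF'
      hderiv 0
    rw [hinvariant] at this
    exact this.unique (hasDerivAt_const _ _)
  simp only [F', Φ, skewAdjointFlow_zero, map_smul, smul_eq_mul, integral_const_mul] at hzero
  exact (mul_eq_zero.1 hzero).resolve_left hr

section Coordinates

variable {ι : Type*} [Fintype ι]

def coordRotationGenerator [DecidableEq ι] (i l : ι) :
    skewAdjoint (EuclideanSpace ℝ ι →L[ℝ] EuclideanSpace ℝ ι) :=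
  ⟨(EuclideanSpace.proj i).smulRight (EuclideanSpace.single l 1)
      - (EuclideanSpace.proj l).smulRight (EuclideanSpace.single i 1), by
    rw [skewAdjoint.mem_iff, ContinuousLinearMap.star_eq_adjoint, eq_comm,
      ContinuousLinearMap.eq_adjoint_iff]
    intro x y
    simp only [neg_sub, sub_apply, ContinuousLinearMap.smulRight_apply, PiLp.proj_apply,
      inner_sub_left, inner_sub_right, inner_smul_left, inner_smul_right, Real.ringHom_apply,
      EuclideanSpace.inner_single_left, EuclideanSpace.inner_single_right, one_mul]
    ring⟩

theorem coordRotationGenerator_apply [DecidableEq ι] (i l : ι) (x : EuclideanSpace ℝ ι) :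
    (coordRotationGenerator i l : EuclideanSpace ℝ ι →L[ℝ] EuclideanSpace ℝ ι) x
      = x i • EuclideanSpace.single l 1 - x l • EuclideanSpace.single i 1 := rfl

theorem integrable_coord_mul_fderiv_toSphere {h : EuclideanSpace ℝ ι → ℝ}
    {U : Set (EuclideanSpace ℝ ι)} (hU : IsOpen U) (hh : ContDiffOn ℝ 1 h U) {r : ℝ}
    (hrU : ∀ σ ∈ sphere (0 : EuclideanSpace ℝ ι) 1, r • σ ∈ U) (i : ι)
    (v : EuclideanSpace ℝ ι) :
    Integrable (fun σ : sphere (0 : EuclideanSpace ℝ ι) 1 =>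
      (σ : EuclideanSpace ℝ ι) i * fderiv ℝ h (r • (σ : EuclideanSpace ℝ ι)) v)
      (volume : Measure (EuclideanSpace ℝ ι)).toSphere := by
  have hfderiv : Continuous fun σ : sphere (0 : EuclideanSpace ℝ ι) 1 =>
      fderiv ℝ h (r • (σ : EuclideanSpace ℝ ι)) :=
    (hh.continuousOn_fderiv_of_isOpen hU le_rfl).comp_continuous
      (continuous_subtype_val.const_smul r) fun σ => hrU σ σ.2
  exact (((EuclideanSpace.proj i).continuous.comp continuous_subtype_val).mul
    (hfderiv.clm_apply continuous_const)).integrable_of_hasCompactSupport (.of_compactSpace _)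

theorem integral_toSphere_coord_mul_fderiv_comm [DecidableEq ι] {h : EuclideanSpace ℝ ι → ℝ}
    {U : Set (EuclideanSpace ℝ ι)} (hU : IsOpen U) (hh : ContDiffOn ℝ 1 h U) {r : ℝ}
    (hr : r ≠ 0) (hrU : ∀ σ ∈ sphere (0 : EuclideanSpace ℝ ι) 1, r • σ ∈ U) (i l : ι) :
    ∫ σ : sphere (0 : EuclideanSpace ℝ ι) 1, (σ : EuclideanSpace ℝ ι) i *
        fderiv ℝ h (r • (σ : EuclideanSpace ℝ ι)) (EuclideanSpace.single l 1)
      ∂(volume : Measure (EuclideanSpace ℝ ι)).toSphere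
    = ∫ σ : sphere (0 : EuclideanSpace ℝ ι) 1, (σ : EuclideanSpace ℝ ι) l *
        fderiv ℝ h (r • (σ : EuclideanSpace ℝ ι)) (EuclideanSpace.single i 1)
      ∂(volume : Measure (EuclideanSpace ℝ ι)).toSphere := by
  have := integral_toSphere_fderiv_skewAdjoint (coordRotationGenerator i l) hU hh hr hrU
  simp only [coordRotationGenerator_apply, map_sub, map_smul, smul_eq_mul] at this
  rwa [integral_sub (integrable_coord_mul_fderiv_toSphere hU hh hrU i _)
    (integrable_coord_mul_fderiv_toSphere hU hh hrU l _), sub_eq_zero] at this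

theorem integral_toSphere_sum_coord_mul_fderiv [DecidableEq ι]
    {u : EuclideanSpace ℝ ι → EuclideanSpace ℝ ι} {U : Set (EuclideanSpace ℝ ι)} (hU : IsOpen U)
    (hu : ∀ k, ContDiffOn ℝ 1 (fun y => u y k) U) {r : ℝ} (hr : r ≠ 0)
    (hrU : ∀ σ ∈ sphere (0 : EuclideanSpace ℝ ι) 1, r • σ ∈ U) (j : ι) :
    ∫ σ : sphere (0 : EuclideanSpace ℝ ι) 1, ∑ k, (σ : EuclideanSpace ℝ ι) k *
        fderiv ℝ (fun y => u y k) (r • (σ : EuclideanSpace ℝ ι)) (EuclideanSpace.single j 1)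
      ∂(volume : Measure (EuclideanSpace ℝ ι)).toSphere
    = ∫ σ : sphere (0 : EuclideanSpace ℝ ι) 1, (σ : EuclideanSpace ℝ ι) j * ∑ k,
        fderiv ℝ (fun y => u y k) (r • (σ : EuclideanSpace ℝ ι)) (EuclideanSpace.single k 1)
      ∂(volume : Measure (EuclideanSpace ℝ ι)).toSphere := by
  simp_rw [Finset.mul_sum]
  rw [integral_finsetSum _ fun k _ => integrable_coord_mul_fderiv_toSphere hU (hu k) hrU k _,
    integral_finsetSum _ fun k _ => integrable_coord_mul_fderiv_toSphere hU (hu k) hrU j _]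
  exact Finset.sum_congr rfl fun k _ =>
    integral_toSphere_coord_mul_fderiv_comm hU (hu k) hr hrU k j

theorem coord_eq_neg_sum_mul_fderiv_of_tangent [DecidableEq ι]
    {u : EuclideanSpace ℝ ι → EuclideanSpace ℝ ι} {x : EuclideanSpace ℝ ι}
    (hu : ∀ k, DifferentiableAt ℝ (fun y => u y k) x)
    (htan : ∀ᶠ y in 𝓝 x, ∑ k, y k * u y k = 0) (j : ι) :
    u x j = -∑ k, x k * fderiv ℝ (fun y => u y k) x (EuclideanSpace.single j 1) := by
  have hsum : HasFDerivAt (fun y => ∑ k, y k * u y k)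
      (∑ k, (x k • fderiv ℝ (fun y => u y k) x + u x k • EuclideanSpace.proj k)) x :=
    HasFDerivAt.fun_sum fun k _ => (EuclideanSpace.proj k).hasFDerivAt.mul (hu k).hasFDerivAt
  have hzero := congrArg (· (EuclideanSpace.single j 1))
    (hsum.unique ((hasFDerivAt_const 0 x).congr_of_eventuallyEq htan))
  simp only [Finset.sum_add_distrib, add_apply, sum_apply, smul_apply, smul_eq_mul,
    PiLp.proj_apply, PiLp.single_apply, mul_ite, mul_one, mul_zero, Finset.sum_ite_eq',
    Finset.mem_univ, if_true, zero_apply] at hzero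
  linarith

end Coordinates

theorem stmt_5_general (N : ℕ)
    (u : EuclideanSpace ℝ (Fin N) → EuclideanSpace ℝ (Fin N))
    (hu : ContDiffOn ℝ (⊤ : ℕ∞) u {(0 : EuclideanSpace ℝ (Fin N))}ᶜ)
    (htor : ∀ x, x ≠ 0 → ∑ k, x k * u x k = 0)
    (hdiv : ∀ x, x ≠ 0 → divg u x = 0)
    (r : ℝ) (hr : 0 < r) :
    (∫ σ : sphere (0 : EuclideanSpace ℝ (Fin N)) 1,
        u (r • (σ : EuclideanSpace ℝ (Fin N))) ∂(sphereMeasure N)) = 0 := by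
  have hrU (σ : EuclideanSpace ℝ (Fin N)) (hσ : σ ∈ sphere 0 1) : r • σ ∈ ({0}ᶜ : Set _) :=
    smul_ne_zero hr.ne' (ne_zero_of_mem_unit_sphere ⟨σ, hσ⟩)
  have huk (k : Fin N) : ContDiffOn ℝ 1 (fun y => u y k) {0}ᶜ :=
    ((EuclideanSpace.proj k).contDiff.comp_contDiffOn hu).of_le (by exact_mod_cast le_top)
  have hcont : Continuous fun σ : sphere (0 : EuclideanSpace ℝ (Fin N)) 1 => u (r • (σ : _)) :=
    hu.continuousOn.comp_continuous (continuous_subtype_val.const_smul r) fun σ => hrU σ σ.2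
  have htan (σ : sphere (0 : EuclideanSpace ℝ (Fin N)) 1) (j : Fin N) :
      u (r • (σ : _)) j = -r * ∑ k, (σ : EuclideanSpace ℝ (Fin N)) k *
        fderiv ℝ (fun y => u y k) (r • (σ : _)) (EuclideanSpace.single j 1) := by
    have hx := hrU σ σ.2
    rw [coord_eq_neg_sum_mul_fderiv_of_tangent
      (fun k => ((huk k).differentiableOn one_ne_zero _ hx).differentiableAt
        (isOpen_compl_singleton.mem_nhds hx))
      (mem_of_superset (isOpen_compl_singleton.mem_nhds hx) htor), neg_mul, Finset.mul_sum]
    simp only [PiLp.smul_apply, smul_eq_mul, mul_assoc]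
  unfold sphereMeasure
  set μ := (volume : Measure (EuclideanSpace ℝ (Fin N))).toSphere
  ext j
  calc (∫ σ, u (r • (σ : EuclideanSpace ℝ (Fin N))) ∂μ) j
      = ∫ σ, u (r • (σ : EuclideanSpace ℝ (Fin N))) j ∂μ :=
        ((EuclideanSpace.proj j).integral_comp_comm
          (hcont.integrable_of_hasCompactSupport (.of_compactSpace _))).symm
    _ = -r * ∫ σ, (σ : EuclideanSpace ℝ (Fin N)) j * divg u (r • (σ : _)) ∂μ := by
        simp only [htan, integral_const_mul, divg]
        exact congrArg _ (integral_toSphere_sum_coord_mul_fderiv isOpen_compl_singleton huk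
          hr.ne' hrU j)
    _ = 0 := by
        simp [hdiv _ (hrU _ (Subtype.prop _))]

/-- A smooth toroidal field on `ℝ^N ∖ {0}` (i.e. `x·u(x) = 0` and `div u = 0` away from
the origin) has zero spherical mean on every sphere of radius `r > 0`. -/
theorem stmt_5 (N : ℕ) (hN : 3 ≤ N)
    (u : EuclideanSpace ℝ (Fin N) → EuclideanSpace ℝ (Fin N))
    (hu : ContDiffOn ℝ (⊤ : ℕ∞) u {(0 : EuclideanSpace ℝ (Fin N))}ᶜ)
    (htor : ∀ x, x ≠ 0 → ∑ k, x k * u x k = 0)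
    (hdiv : ∀ x, x ≠ 0 → divg u x = 0)
    (r : ℝ) (hr : 0 < r) :
    (∫ σ : sphere (0 : EuclideanSpace ℝ (Fin N)) 1,
        u (r • (σ : EuclideanSpace ℝ (Fin N))) ∂(sphereMeasure N)) = 0 :=
  stmt_5_general N u hu htor hdiv r hr
end
end

section
/- Let μ > 0 and ε > 0 with ε < μ²/4, and let g : (0,∞) → ℝ be a smooth function satisfying the boundary conditions (B) and having finite D_μ-norm. Then Q[g] · P₁[g] ≥ (1/4)(√(μ²−4ε)+1)² · (P₀[g])², i.e. ∫₀^∞ (g'')² x^{μ+1} dx · ∫₀^∞ (x²(g')² − ε g²) x^{μ−1} dx ≥ (1/4)(√(μ²−4ε)+1)² (∫₀^∞ (g')² x^μ dx)². -/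
/-!
Let `a = -(μ + √(μ² - 4ε))/2`, a root of `a² + μa + ε = 0`, and put `F₁ = x g'' + μ g'`,
`F₂ = x g' - a g`. Against the weight `x^(μ-1)`, the functions `F₁²`, `F₂²`, `F₁F₂` differ from
`g''² x^(μ+1)`, `(x² g'² - ε g²) x^(μ-1)`, `(a + (μ-1)/2) g'² x^μ` respectively by derivatives
of functions `u v x^p` with `u, v ∈ {g, g'}`; these integrate to zero because (B) makes
`u v x^p` vanish at both ends. Hence `∫ F₁² x^(μ-1) = Q`, `∫ F₂² x^(μ-1) = P₁` and
`∫ F₁F₂ x^(μ-1) = -(√(μ² - 4ε) + 1)/2 · P₀`, and the weighted Cauchy–Schwarz inequality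
gives the claim.
-/

open MeasureTheory Filter

noncomputable section

/-- `P₀[g] = ∫₀^∞ (g')² x^μ dx`. -/
def P0 (μ : ℝ) (g : ℝ → ℝ) : ℝ :=
  ∫ x in Set.Ioi (0 : ℝ), (deriv g x) ^ 2 * x ^ μ

/-- `P₁[g] = ∫₀^∞ (x²(g')² − ε g²) x^{μ−1} dx`. -/
def P1 (μ ε : ℝ) (g : ℝ → ℝ) : ℝ :=
  ∫ x in Set.Ioi (0 : ℝ), (x ^ 2 * (deriv g x) ^ 2 - ε * (g x) ^ 2) * x ^ (μ - 1)

/-- `Q[g] = ∫₀^∞ (g'')² x^{μ+1} dx`. -/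
def Q (μ : ℝ) (g : ℝ → ℝ) : ℝ :=
  ∫ x in Set.Ioi (0 : ℝ), (deriv (deriv g) x) ^ 2 * x ^ (μ + 1)

/-- The boundary conditions (B): `limsup_{x→0}(|g|+|g'|) < ∞` and
`x^{μ+1} g'(x)² + x^μ g(x)² → 0` as `x → ∞`. -/
def BoundaryB (μ : ℝ) (g : ℝ → ℝ) : Prop :=
  (∃ M : ℝ, ∀ᶠ x in nhdsWithin 0 (Set.Ioi (0 : ℝ)), |g x| + |deriv g x| ≤ M) ∧
    Tendsto (fun x : ℝ => x ^ (μ + 1) * (deriv g x) ^ 2 + x ^ μ * (g x) ^ 2)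
      atTop (nhds 0)

/-- `g` has finite `D_μ`-norm. -/
def FiniteDmu (μ : ℝ) (g : ℝ → ℝ) : Prop :=
  IntegrableOn (fun x => (deriv (deriv g) x) ^ 2 * x ^ (μ + 1)) (Set.Ioi 0) volume ∧
    IntegrableOn (fun x => (deriv g x) ^ 2 * (x + 1) * x ^ μ) (Set.Ioi 0) volume ∧
    IntegrableOn (fun x => (g x) ^ 2 * x ^ (μ - 1)) (Set.Ioi 0) volume

open Set Topology Asymptotics

theorem continuousOn_rpow_const_Ioi (r : ℝ) : ContinuousOn (fun x : ℝ => x ^ r) (Ioi 0) :=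
  continuousOn_id.rpow_const fun _ hx => Or.inl (ne_of_gt hx)

theorem rpow_eq_rpow_sub_one_mul {x : ℝ} (hx : x ≠ 0) (y : ℝ) : x ^ y = x ^ (y - 1) * x := by
  rw [← Real.rpow_add_one hx, sub_add_cancel]

theorem tendsto_rpow_nhdsGT_zero {p : ℝ} (hp : 0 < p) :
    Tendsto (fun x : ℝ => x ^ p) (𝓝[>] 0) (𝓝 0) :=
  ((continuous_id.rpow_const fun _ => Or.inr hp.le).tendsto' 0 0
    (Real.zero_rpow hp.ne')).mono_left nhdsWithin_le_nhds

theorem integral_Ioi_of_hasDerivAt_of_tendsto_nhdsGT {E : Type*} [NormedAddCommGroup E]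
    [NormedSpace ℝ E] [CompleteSpace E] {f f' : ℝ → E} {a : ℝ} {m n : E}
    (hderiv : ∀ x ∈ Ioi a, HasDerivAt f (f' x) x) (hint : IntegrableOn f' (Ioi a))
    (ha : Tendsto f (𝓝[>] a) (𝓝 m)) (htop : Tendsto f atTop (𝓝 n)) :
    ∫ x in Ioi a, f' x = n - m := by
  classical
  -- redefining `f a := m` makes `f` continuous at `a` from the right
  have hcont : ContinuousWithinAt (Function.update f a m) (Ici a) a := by
    rwa [continuousWithinAt_update_same, Ici_sdiff_left]
  have hupdate : ∀ x ∈ Ioi a, ∀ᶠ y in 𝓝 x, Function.update f a m y = f y := fun x hx => by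
    filter_upwards [eventually_ne_nhds (ne_of_gt hx)] with y hy
    exact Function.update_of_ne hy _ _
  have := integral_Ioi_of_hasDerivAt_of_tendsto hcont
    (fun x hx => (hderiv x hx).congr_of_eventuallyEq (hupdate x hx)) hint
    (htop.congr' (by
      filter_upwards [Ioi_mem_atTop a] with y hy
      exact (Function.update_of_ne (ne_of_gt hy) _ _).symm))
  simpa using this

theorem sq_integral_mul_mul_le {α : Type*} [MeasurableSpace α] {ν : Measure α}
    {f g w : α → ℝ} (hw : 0 ≤ᵐ[ν] w) (hf : Integrable (fun x => f x ^ 2 * w x) ν)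
    (hg : Integrable (fun x => g x ^ 2 * w x) ν) (hfg : Integrable (fun x => f x * g x * w x) ν) :
    (∫ x, f x * g x * w x ∂ν) ^ 2 ≤ (∫ x, f x ^ 2 * w x ∂ν) * ∫ x, g x ^ 2 * w x ∂ν := by
  have hquad : ∀ t : ℝ, 0 ≤ (∫ x, f x ^ 2 * w x ∂ν) * (t * t)
      + (2 * ∫ x, f x * g x * w x ∂ν) * t + ∫ x, g x ^ 2 * w x ∂ν := by
    intro t
    have hexpand : ∫ x, (t * f x + g x) ^ 2 * w x ∂ν = (∫ x, f x ^ 2 * w x ∂ν) * (t * t)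
        + (2 * ∫ x, f x * g x * w x ∂ν) * t + ∫ x, g x ^ 2 * w x ∂ν := by
      have hA := hf.mul_const (t * t)
      have hB := (hfg.const_mul 2).mul_const t
      have hAB : Integrable (fun x => f x ^ 2 * w x * (t * t) + 2 * (f x * g x * w x) * t) ν :=
        hA.add hB
      rw [← integral_mul_const, ← integral_const_mul, ← integral_mul_const,
        ← integral_add hA hB, ← integral_add hAB hg]
      congr 1 with x
      ring
    rw [← hexpand]
    exact integral_nonneg_of_ae (hw.mono fun x hx => mul_nonneg (sq_nonneg _) hx)
  have := discrim_le_zero hquad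
  rw [discrim] at this
  linarith

theorem Integrable.mul_mul_of_sq_mul {α : Type*} [MeasurableSpace α] {ν : Measure α}
    {u v w w₁ w₂ : α → ℝ} (hu : Integrable (fun x => u x ^ 2 * w₁ x) ν)
    (hv : Integrable (fun x => v x ^ 2 * w₂ x) ν)
    (hm : AEStronglyMeasurable (fun x => u x * v x * w x) ν)
    (hw : ∀ᵐ x ∂ν, 0 ≤ w₁ x ∧ 0 ≤ w₂ x ∧ w x ^ 2 = w₁ x * w₂ x) :
    Integrable (fun x => u x * v x * w x) ν := by
  refine ((hu.add hv).const_mul (1 / 2)).mono' hm (hw.mono fun x ⟨h₁, h₂, hw⟩ => ?_)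
  have hsq : (u x * v x * w x) ^ 2 ≤ (1 / 2 * (u x ^ 2 * w₁ x + v x ^ 2 * w₂ x)) ^ 2 := by
    have : (u x * v x * w x) ^ 2 = (u x ^ 2 * w₁ x) * (v x ^ 2 * w₂ x) := by
      rw [mul_pow, hw]; ring
    rw [this]
    nlinarith [sq_nonneg (u x ^ 2 * w₁ x - v x ^ 2 * w₂ x)]
  rw [Real.norm_eq_abs]
  exact abs_le_of_sq_le_sq hsq (mul_nonneg (by norm_num)
    (add_nonneg (mul_nonneg (sq_nonneg _) h₁) (mul_nonneg (sq_nonneg _) h₂)))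

theorem integrableOn_Ioi_mul_mul_rpow {u v : ℝ → ℝ} {p q r : ℝ} (hu : ContinuousOn u (Ioi 0))
    (hv : ContinuousOn v (Ioi 0)) (hpq : p + q = 2 * r)
    (hu2 : IntegrableOn (fun x => u x ^ 2 * x ^ p) (Ioi 0))
    (hv2 : IntegrableOn (fun x => v x ^ 2 * x ^ q) (Ioi 0)) :
    IntegrableOn (fun x => u x * v x * x ^ r) (Ioi 0) := by
  refine Integrable.mul_mul_of_sq_mul hu2 hv2
    (((hu.mul hv).mul (continuousOn_rpow_const_Ioi r)).aestronglyMeasurable measurableSet_Ioi)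
    ((ae_restrict_iff' measurableSet_Ioi).2 (Eventually.of_forall fun x hx => ?_))
  refine ⟨(Real.rpow_pos_of_pos hx p).le, (Real.rpow_pos_of_pos hx q).le, ?_⟩
  rw [← Real.rpow_add hx, hpq, ← Real.rpow_natCast, ← Real.rpow_mul hx.le]
  ring_nf

theorem integrableOn_Ioi_sq_mul_rpow_sub_one {u : ℝ → ℝ} {μ : ℝ} (hμ : 0 < μ)
    (hu : ContinuousOn u (Ioi 0)) (hbdd : u =O[𝓝[>] 0] (fun _ => (1 : ℝ)))
    (hint : IntegrableOn (fun x => u x ^ 2 * x ^ μ) (Ioi 0)) :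
    IntegrableOn (fun x => u x ^ 2 * x ^ (μ - 1)) (Ioi 0) := by
  have hcont : ContinuousOn (fun x => u x ^ 2 * x ^ (μ - 1)) (Ioi 0) :=
    (hu.pow 2).mul (continuousOn_rpow_const_Ioi _)
  refine integrableOn_Ioi_iff_integrableAtFilter_atTop_nhdsWithin.2
    ⟨?_, ?_, hcont.locallyIntegrableOn measurableSet_Ioi⟩
  · have hO : (fun x => u x ^ 2 * x ^ (μ - 1)) =O[atTop] (fun x => u x ^ 2 * x ^ μ) := by
      refine IsBigO.of_bound' ?_
      filter_upwards [eventually_ge_atTop 1] with x hx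
      have hx0 : 0 < x := zero_lt_one.trans_le hx
      rw [Real.norm_eq_abs, Real.norm_eq_abs,
        abs_of_nonneg (mul_nonneg (sq_nonneg _) (Real.rpow_pos_of_pos hx0 _).le),
        abs_of_nonneg (mul_nonneg (sq_nonneg _) (Real.rpow_pos_of_pos hx0 _).le)]
      exact mul_le_mul_of_nonneg_left (Real.rpow_le_rpow_of_exponent_le hx (by linarith))
        (sq_nonneg _)
    exact hO.integrableAtFilter
      ⟨Ioi 0, Ioi_mem_atTop 0, hcont.aestronglyMeasurable measurableSet_Ioi⟩
      ⟨Ioi 0, Ioi_mem_atTop 0, hint⟩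
  · have hO : (fun x => u x ^ 2 * x ^ (μ - 1)) =O[𝓝[>] 0] (fun x : ℝ => x ^ (μ - 1)) := by
      simpa [sq] using (hbdd.mul hbdd).mul (isBigO_refl (fun x : ℝ => x ^ (μ - 1)) _)
    exact hO.integrableAtFilter (hcont.stronglyMeasurableAtFilter_nhdsWithin measurableSet_Ioi 0)
      ⟨Ioo 0 1, Ioo_mem_nhdsGT one_pos,
        (intervalIntegral.integrableOn_Ioo_rpow_iff one_pos).2 (by linarith)⟩

theorem tendsto_mul_mul_of_tendsto_sq_mul {α : Type*} {l : Filter α} {u v w : α → ℝ}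
    (hw : ∀ᶠ x in l, 0 ≤ w x) (hu : Tendsto (fun x => u x ^ 2 * w x) l (𝓝 0))
    (hv : Tendsto (fun x => v x ^ 2 * w x) l (𝓝 0)) :
    Tendsto (fun x => u x * v x * w x) l (𝓝 0) := by
  refine squeeze_zero_norm' ?_ (by simpa using (hu.add hv).const_mul (1 / 2))
  filter_upwards [hw] with x hx
  rw [Real.norm_eq_abs, abs_mul, abs_of_nonneg hx]
  have : |u x * v x| ≤ 1 / 2 * (u x ^ 2 + v x ^ 2) := by
    rw [abs_le]; constructor <;> nlinarith [sq_nonneg (u x + v x), sq_nonneg (u x - v x)]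
  calc |u x * v x| * w x ≤ 1 / 2 * (u x ^ 2 + v x ^ 2) * w x :=
        mul_le_mul_of_nonneg_right this hx
    _ = 1 / 2 * (u x ^ 2 * w x + v x ^ 2 * w x) := by ring

theorem integrableOn_and_integral_Ioi_deriv_mul_mul_rpow_eq_zero {u v u' v' : ℝ → ℝ} {p : ℝ}
    (hp : 0 < p) (hu : ∀ x ∈ Ioi (0 : ℝ), HasDerivAt u (u' x) x)
    (hv : ∀ x ∈ Ioi (0 : ℝ), HasDerivAt v (v' x) x)
    (hu0 : u =O[𝓝[>] 0] (fun _ => (1 : ℝ))) (hv0 : v =O[𝓝[>] 0] (fun _ => (1 : ℝ)))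
    (hutop : Tendsto (fun x => u x ^ 2 * x ^ p) atTop (𝓝 0))
    (hvtop : Tendsto (fun x => v x ^ 2 * x ^ p) atTop (𝓝 0))
    (h₁ : IntegrableOn (fun x => u' x * v x * x ^ p) (Ioi 0))
    (h₂ : IntegrableOn (fun x => u x * v' x * x ^ p) (Ioi 0))
    (h₃ : IntegrableOn (fun x => u x * v x * x ^ (p - 1)) (Ioi 0)) :
    IntegrableOn
      (fun x => u' x * v x * x ^ p + u x * v' x * x ^ p + p * (u x * v x * x ^ (p - 1))) (Ioi 0) ∧
    ∫ x in Ioi 0, (u' x * v x * x ^ p + u x * v' x * x ^ p + p * (u x * v x * x ^ (p - 1))) =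
      0 := by
  have hint := (h₁.add h₂).add (h₃.const_mul p)
  have hderiv : ∀ x ∈ Ioi (0 : ℝ), HasDerivAt (fun x => u x * v x * x ^ p)
      (u' x * v x * x ^ p + u x * v' x * x ^ p + p * (u x * v x * x ^ (p - 1))) x := fun x hx =>
    (((hu x hx).mul (hv x hx)).mul
      (Real.hasDerivAt_rpow_const (Or.inl (ne_of_gt hx)))).congr_deriv
        (by simp only [Pi.mul_apply]; ring)
  have h0 : Tendsto (fun x => u x * v x * x ^ p) (𝓝[>] 0) (𝓝 0) :=
    ((hu0.mul hv0).mul (isBigO_refl _ _)).trans_tendsto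
      (by simpa using tendsto_rpow_nhdsGT_zero hp)
  have htop : Tendsto (fun x => u x * v x * x ^ p) atTop (𝓝 0) :=
    tendsto_mul_mul_of_tendsto_sq_mul
      ((eventually_gt_atTop 0).mono fun x hx => (Real.rpow_pos_of_pos hx p).le) hutop hvtop
  exact ⟨hint, by simpa using integral_Ioi_of_hasDerivAt_of_tendsto_nhdsGT hderiv hint h0 htop⟩

theorem integrableOn_and_setIntegral_eq_of_eqOn_add_mul {α : Type*} [MeasurableSpace α]
    {ν : Measure α} {s : Set α} (hs : MeasurableSet s) {f T D : α → ℝ} {c : ℝ}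
    (hf : EqOn f (fun x => T x + c * D x) s) (hT : IntegrableOn T s ν)
    (hD : IntegrableOn D s ν ∧ ∫ x in s, D x ∂ν = 0) :
    IntegrableOn f s ν ∧ ∫ x in s, f x ∂ν = ∫ x in s, T x ∂ν := by
  refine ⟨(hT.add (hD.1.const_mul c)).congr_fun hf.symm hs, ?_⟩
  rw [setIntegral_congr_fun hs hf, integral_add hT (hD.1.const_mul c), integral_const_mul, hD.2,
    mul_zero, add_zero]

theorem ContDiffOn.hasDerivAt_deriv {f : ℝ → ℝ} {s : Set ℝ} {n : WithTop ℕ∞} {x : ℝ}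
    (hf : ContDiffOn ℝ n f s) (hs : IsOpen s) (hn : n ≠ 0) (hx : x ∈ s) :
    HasDerivAt f (deriv f x) x :=
  ((hf.differentiableOn hn).differentiableAt (hs.mem_nhds hx)).hasDerivAt

section

variable {μ ε : ℝ} {g : ℝ → ℝ}

theorem contDiffOn_deriv_Ioi (hg : ContDiffOn ℝ 2 g (Ioi 0)) :
    ContDiffOn ℝ 1 (deriv g) (Ioi 0) :=
  hg.deriv_of_isOpen isOpen_Ioi (by norm_num)

theorem continuousOn_deriv_deriv_Ioi (hg : ContDiffOn ℝ 2 g (Ioi 0)) :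
    ContinuousOn (deriv (deriv g)) (Ioi 0) :=
  ((contDiffOn_deriv_Ioi hg).deriv_of_isOpen isOpen_Ioi (m := 0) (by norm_num)).continuousOn

theorem BoundaryB.isBigO_one (hB : BoundaryB μ g) : g =O[𝓝[>] 0] (fun _ => (1 : ℝ)) := by
  obtain ⟨⟨M, hM⟩, -⟩ := hB
  refine IsBigO.of_bound M ?_
  filter_upwards [hM] with x hx
  simpa using (le_add_of_nonneg_right (abs_nonneg _)).trans hx

theorem BoundaryB.deriv_isBigO_one (hB : BoundaryB μ g) :
    deriv g =O[𝓝[>] 0] (fun _ => (1 : ℝ)) := by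
  obtain ⟨⟨M, hM⟩, -⟩ := hB
  refine IsBigO.of_bound M ?_
  filter_upwards [hM] with x hx
  simpa using (le_add_of_nonneg_left (abs_nonneg _)).trans hx

theorem BoundaryB.tendsto_deriv_sq_mul_rpow_add_one (hB : BoundaryB μ g) :
    Tendsto (fun x => deriv g x ^ 2 * x ^ (μ + 1)) atTop (𝓝 0) := by
  refine squeeze_zero' ?_ ?_ hB.2
  · filter_upwards [eventually_gt_atTop 0] with x hx
    exact mul_nonneg (sq_nonneg _) (Real.rpow_pos_of_pos hx _).le
  · filter_upwards [eventually_gt_atTop 0] with x hx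
    nlinarith [mul_nonneg (Real.rpow_pos_of_pos hx μ).le (sq_nonneg (g x))]

theorem BoundaryB.tendsto_sq_mul_rpow (hB : BoundaryB μ g) :
    Tendsto (fun x => g x ^ 2 * x ^ μ) atTop (𝓝 0) := by
  refine squeeze_zero' ?_ ?_ hB.2
  · filter_upwards [eventually_gt_atTop 0] with x hx
    exact mul_nonneg (sq_nonneg _) (Real.rpow_pos_of_pos hx _).le
  · filter_upwards [eventually_gt_atTop 0] with x hx
    nlinarith [mul_nonneg (Real.rpow_pos_of_pos hx (μ + 1)).le (sq_nonneg (deriv g x))]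

theorem BoundaryB.tendsto_deriv_sq_mul_rpow (hB : BoundaryB μ g) :
    Tendsto (fun x => deriv g x ^ 2 * x ^ μ) atTop (𝓝 0) := by
  refine squeeze_zero' ?_ ?_ hB.tendsto_deriv_sq_mul_rpow_add_one
  · filter_upwards [eventually_gt_atTop 0] with x hx
    exact mul_nonneg (sq_nonneg _) (Real.rpow_pos_of_pos hx _).le
  · filter_upwards [eventually_ge_atTop 1] with x hx
    exact mul_le_mul_of_nonneg_left (Real.rpow_le_rpow_of_exponent_le hx (by linarith))
      (sq_nonneg _)

theorem FiniteDmu.integrableOn_deriv_sq_mul_rpow_add_one (hD : FiniteDmu μ g)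
    (hg' : ContinuousOn (deriv g) (Ioi 0)) :
    IntegrableOn (fun x => deriv g x ^ 2 * x ^ (μ + 1)) (Ioi 0) := by
  refine hD.2.1.mono'
    (((hg'.pow 2).mul (continuousOn_rpow_const_Ioi _)).aestronglyMeasurable measurableSet_Ioi)
    ((ae_restrict_iff' measurableSet_Ioi).2 (Eventually.of_forall fun x (hx : 0 < x) => ?_))
  rw [Real.norm_eq_abs, abs_of_nonneg (mul_nonneg (sq_nonneg _) (Real.rpow_pos_of_pos hx _).le),
    Real.rpow_add_one hx.ne']
  nlinarith [mul_nonneg (sq_nonneg (deriv g x)) (Real.rpow_pos_of_pos hx μ).le]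

theorem FiniteDmu.integrableOn_deriv_sq_mul_rpow (hD : FiniteDmu μ g)
    (hg' : ContinuousOn (deriv g) (Ioi 0)) :
    IntegrableOn (fun x => deriv g x ^ 2 * x ^ μ) (Ioi 0) := by
  refine hD.2.1.mono'
    (((hg'.pow 2).mul (continuousOn_rpow_const_Ioi _)).aestronglyMeasurable measurableSet_Ioi)
    ((ae_restrict_iff' measurableSet_Ioi).2 (Eventually.of_forall fun x (hx : 0 < x) => ?_))
  rw [Real.norm_eq_abs, abs_of_nonneg (mul_nonneg (sq_nonneg _) (Real.rpow_pos_of_pos hx _).le)]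
  nlinarith [mul_nonneg (sq_nonneg (deriv g x)) (Real.rpow_pos_of_pos hx μ).le]

theorem integrableOn_deriv_sq_mul_rpow_sub_one (hμ : 0 < μ) (hg : ContDiffOn ℝ 2 g (Ioi 0))
    (hB : BoundaryB μ g) (hD : FiniteDmu μ g) :
    IntegrableOn (fun x => deriv g x ^ 2 * x ^ (μ - 1)) (Ioi 0) :=
  integrableOn_Ioi_sq_mul_rpow_sub_one hμ (contDiffOn_deriv_Ioi hg).continuousOn
    hB.deriv_isBigO_one (hD.integrableOn_deriv_sq_mul_rpow (contDiffOn_deriv_Ioi hg).continuousOn)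

theorem integral_sq_eq_Q (hμ : 0 < μ) (hg : ContDiffOn ℝ 2 g (Ioi 0)) (hB : BoundaryB μ g)
    (hD : FiniteDmu μ g) :
    IntegrableOn (fun x => (x * deriv (deriv g) x + μ * deriv g x) ^ 2 * x ^ (μ - 1)) (Ioi 0) ∧
    ∫ x in Ioi 0, (x * deriv (deriv g) x + μ * deriv g x) ^ 2 * x ^ (μ - 1) = Q μ g := by
  have hg' := (contDiffOn_deriv_Ioi hg).continuousOn
  have hg'' := continuousOn_deriv_deriv_Ioi hg
  have hR := integrableOn_deriv_sq_mul_rpow_sub_one hμ hg hB hD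
  have hd2 : ∀ x ∈ Ioi (0 : ℝ), HasDerivAt (deriv g) (deriv (deriv g) x) x := fun x hx =>
    (contDiffOn_deriv_Ioi hg).hasDerivAt_deriv isOpen_Ioi one_ne_zero hx
  -- `(x g'' + μ g')² x^(μ-1) = g''² x^(μ+1) + μ (g'² x^μ)'`
  refine integrableOn_and_setIntegral_eq_of_eqOn_add_mul measurableSet_Ioi (c := μ) ?_ hD.1
    (integrableOn_and_integral_Ioi_deriv_mul_mul_rpow_eq_zero hμ hd2 hd2 hB.deriv_isBigO_one
      hB.deriv_isBigO_one hB.tendsto_deriv_sq_mul_rpow hB.tendsto_deriv_sq_mul_rpow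
      (integrableOn_Ioi_mul_mul_rpow hg'' hg' (by ring) hD.1 hR)
      (integrableOn_Ioi_mul_mul_rpow hg' hg'' (by ring) hR hD.1)
      (integrableOn_Ioi_mul_mul_rpow hg' hg' (by ring) hR hR))
  intro x (hx : 0 < x)
  beta_reduce
  rw [Real.rpow_add_one hx.ne', rpow_eq_rpow_sub_one_mul hx.ne' μ]
  ring

theorem integral_sq_eq_P1 (hμ : 0 < μ) (hg : ContDiffOn ℝ 2 g (Ioi 0)) (hB : BoundaryB μ g)
    (hD : FiniteDmu μ g) {a : ℝ} (ha : a ^ 2 + μ * a + ε = 0) :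
    IntegrableOn (fun x => (x * deriv g x - a * g x) ^ 2 * x ^ (μ - 1)) (Ioi 0) ∧
    ∫ x in Ioi 0, (x * deriv g x - a * g x) ^ 2 * x ^ (μ - 1) = P1 μ ε g := by
  have hg0 := hg.continuousOn
  have hg' := (contDiffOn_deriv_Ioi hg).continuousOn
  have hB' := hD.integrableOn_deriv_sq_mul_rpow_add_one hg'
  have hd1 : ∀ x ∈ Ioi (0 : ℝ), HasDerivAt g (deriv g x) x := fun x hx =>
    hg.hasDerivAt_deriv isOpen_Ioi two_ne_zero hx
  have hP1 :
      IntegrableOn (fun x => (x ^ 2 * deriv g x ^ 2 - ε * g x ^ 2) * x ^ (μ - 1)) (Ioi 0) := by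
    refine (hB'.sub (hD.2.2.const_mul ε)).congr_fun (fun x (hx : 0 < x) => ?_) measurableSet_Ioi
    simp only [Pi.sub_apply]
    rw [Real.rpow_add_one hx.ne', rpow_eq_rpow_sub_one_mul hx.ne' μ]
    ring
  -- `(x g' - a g)² x^(μ-1) = (x² g'² - ε g²) x^(μ-1) - a (g² x^μ)'`, as `a² + ε = -μ a`
  refine integrableOn_and_setIntegral_eq_of_eqOn_add_mul measurableSet_Ioi (c := -a) ?_ hP1
    (integrableOn_and_integral_Ioi_deriv_mul_mul_rpow_eq_zero hμ hd1 hd1 hB.isBigO_one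
      hB.isBigO_one hB.tendsto_sq_mul_rpow hB.tendsto_sq_mul_rpow
      (integrableOn_Ioi_mul_mul_rpow hg' hg0 (by ring) hB' hD.2.2)
      (integrableOn_Ioi_mul_mul_rpow hg0 hg' (by ring) hD.2.2 hB')
      (integrableOn_Ioi_mul_mul_rpow hg0 hg0 (by ring) hD.2.2 hD.2.2))
  intro x (hx : 0 < x)
  beta_reduce
  rw [rpow_eq_rpow_sub_one_mul hx.ne' μ]
  linear_combination (g x ^ 2 * x ^ (μ - 1)) * ha

theorem integral_mul_eq_P0 (hμ : 0 < μ) (hg : ContDiffOn ℝ 2 g (Ioi 0)) (hB : BoundaryB μ g)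
    (hD : FiniteDmu μ g) (a : ℝ) :
    IntegrableOn (fun x => (x * deriv (deriv g) x + μ * deriv g x) * (x * deriv g x - a * g x) *
      x ^ (μ - 1)) (Ioi 0) ∧
    ∫ x in Ioi 0, (x * deriv (deriv g) x + μ * deriv g x) * (x * deriv g x - a * g x) *
      x ^ (μ - 1) = (a + (μ - 1) / 2) * P0 μ g := by
  have hg0 := hg.continuousOn
  have hg' := (contDiffOn_deriv_Ioi hg).continuousOn
  have hg'' := continuousOn_deriv_deriv_Ioi hg
  have hB' := hD.integrableOn_deriv_sq_mul_rpow_add_one hg'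
  have hP := hD.integrableOn_deriv_sq_mul_rpow hg'
  have hR := integrableOn_deriv_sq_mul_rpow_sub_one hμ hg hB hD
  have hd1 : ∀ x ∈ Ioi (0 : ℝ), HasDerivAt g (deriv g x) x := fun x hx =>
    hg.hasDerivAt_deriv isOpen_Ioi two_ne_zero hx
  have hd2 : ∀ x ∈ Ioi (0 : ℝ), HasDerivAt (deriv g) (deriv (deriv g) x) x := fun x hx =>
    (contDiffOn_deriv_Ioi hg).hasDerivAt_deriv isOpen_Ioi one_ne_zero hx
  have hμ1 : μ + 1 - 1 = μ := add_sub_cancel_right μ 1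
  have hP' : IntegrableOn (fun x => deriv g x * deriv g x * x ^ (μ + 1 - 1)) (Ioi 0) := by
    simpa only [hμ1] using integrableOn_Ioi_mul_mul_rpow hg' hg' (by ring) hP hP
  -- `F₁ F₂ x^(μ-1) = (a + (μ-1)/2) g'² x^μ + (g'² x^(μ+1))' / 2 - a (g' g x^μ)'`,
  -- peeled off one derivative at a time
  obtain ⟨hT, hT_eq⟩ := integrableOn_and_setIntegral_eq_of_eqOn_add_mul measurableSet_Ioi
    (c := 1 / 2) (fun x _ => rfl) (hP.const_mul (a + (μ - 1) / 2))
    (integrableOn_and_integral_Ioi_deriv_mul_mul_rpow_eq_zero (by linarith) hd2 hd2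
      hB.deriv_isBigO_one hB.deriv_isBigO_one hB.tendsto_deriv_sq_mul_rpow_add_one
      hB.tendsto_deriv_sq_mul_rpow_add_one
      (integrableOn_Ioi_mul_mul_rpow hg'' hg' (by ring) hD.1 hB')
      (integrableOn_Ioi_mul_mul_rpow hg' hg'' (by ring) hB' hD.1) hP')
  rw [P0, ← integral_const_mul, ← hT_eq]
  refine integrableOn_and_setIntegral_eq_of_eqOn_add_mul measurableSet_Ioi (c := -a) ?_ hT
    (integrableOn_and_integral_Ioi_deriv_mul_mul_rpow_eq_zero hμ hd2 hd1 hB.deriv_isBigO_one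
      hB.isBigO_one hB.tendsto_deriv_sq_mul_rpow hB.tendsto_sq_mul_rpow
      (integrableOn_Ioi_mul_mul_rpow hg'' hg0 (by ring) hD.1 hD.2.2)
      (integrableOn_Ioi_mul_mul_rpow hg' hg' (by ring) hP hP)
      (integrableOn_Ioi_mul_mul_rpow hg' hg0 (by ring) hR hD.2.2))
  intro x (hx : 0 < x)
  simp only [hμ1]
  rw [Real.rpow_add_one hx.ne', rpow_eq_rpow_sub_one_mul hx.ne' μ]
  ring

end

theorem stmt_10_general (μ ε : ℝ) (hμ : 0 < μ) (hεμ : ε < μ ^ 2 / 4)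
    (g : ℝ → ℝ) (hg : ContDiffOn ℝ (⊤ : ℕ∞) g (Set.Ioi 0))
    (hB : BoundaryB μ g) (hD : FiniteDmu μ g) :
    (1 / 4) * (Real.sqrt (μ ^ 2 - 4 * ε) + 1) ^ 2 * (P0 μ g) ^ 2 ≤ Q μ g * P1 μ ε g := by
  have hg2 : ContDiffOn ℝ 2 g (Ioi 0) := hg.of_le (by norm_cast)
  set s := Real.sqrt (μ ^ 2 - 4 * ε)
  have hs : s ^ 2 = μ ^ 2 - 4 * ε := Real.sq_sqrt (by linarith)
  set a := -(μ + s) / 2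
  have ha : a ^ 2 + μ * a + ε = 0 := by linear_combination hs / 4
  obtain ⟨hF₁, hQ⟩ := integral_sq_eq_Q hμ hg2 hB hD
  obtain ⟨hF₂, hP₁⟩ := integral_sq_eq_P1 hμ hg2 hB hD ha
  obtain ⟨hF₁₂, hP₀⟩ := integral_mul_eq_P0 hμ hg2 hB hD a
  have hcs := sq_integral_mul_mul_le (ae_restrict_of_forall_mem measurableSet_Ioi
    fun x (hx : 0 < x) => (Real.rpow_pos_of_pos hx (μ - 1)).le) hF₁ hF₂ hF₁₂
  rw [hQ, hP₁, hP₀] at hcs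
  calc 1 / 4 * (s + 1) ^ 2 * P0 μ g ^ 2 = ((a + (μ - 1) / 2) * P0 μ g) ^ 2 := by ring
    _ ≤ Q μ g * P1 μ ε g := hcs

/-- Sharp one-dimensional inequality: `Q[g]·P₁[g] ≥ (1/4)(√(μ²−4ε)+1)² (P₀[g])²`. -/
theorem stmt_10 (μ ε : ℝ) (hμ : 0 < μ) (hε : 0 < ε) (hεμ : ε < μ ^ 2 / 4)
    (g : ℝ → ℝ) (hg : ContDiffOn ℝ (⊤ : ℕ∞) g (Set.Ioi 0))
    (hB : BoundaryB μ g) (hD : FiniteDmu μ g) :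
    (1 / 4) * (Real.sqrt (μ ^ 2 - 4 * ε) + 1) ^ 2 * (P0 μ g) ^ 2 ≤ Q μ g * P1 μ ε g :=
  stmt_10_general μ ε hμ hεμ g hg hB hD
end
end

section
/- Let μ > 0 and ε > 0 with ε < μ²/4, and set b = (μ − √(μ²−4ε))/2. Let g : (0,∞) → ℝ be a smooth function satisfying the boundary conditions (B) and having finite D_μ-norm, and suppose equality holds: Q[g] + P₁[g] = (√(μ²−4ε)+1) · P₀[g]. Then g solves the differential equation x g''(x) + (x+μ) g'(x) + (μ−b) g(x) = 0 for all x > 0. -/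
open MeasureTheory Filter

noncomputable section

/-!
Write `L g = x g'' + (x + μ) g' + (μ - b) g`. Because `ε = μ b - b²` and `√(μ² - 4ε) = μ - 2b`,
completing the square gives the pointwise identity
`(L g)² x^(μ-1) = e(x) + F'(x)`, where `e` is the integrand of `Q + P₁ - (√(μ² - 4ε) + 1) P₀`
and `F = x^μ (g'² (x + μ) + (μ - b)(g² + 2 g g'))`. The boundary conditions make `F` vanish at
`0⁺` and at `∞`, so integrating over `(0, ∞)` turns the equality case into
`∫ (L g)² x^(μ-1) = 0`; as the integrand is continuous and nonnegative, `L g = 0`.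
Nonnegativity also spares us the integrability of `F'`: exhausting `(0, ∞)` by compact intervals,
monotone convergence gives the integrability of `(L g)² x^(μ-1)`.
-/

open Set Topology

theorem exists_seq_tendsto_nhdsGT_atTop (A : ℝ) :
    ∃ a b : ℕ → ℝ, Tendsto a atTop (𝓝[>] A) ∧ Tendsto b atTop atTop ∧ ∀ n, A < a n ∧ a n ≤ b n := by
  refine ⟨fun n => A + 1 / (n + 1), fun n => A + (n + 1), ?_, ?_, fun n => ⟨?_, ?_⟩⟩
  · refine tendsto_nhdsWithin_of_tendsto_nhds_of_eventually_within _ ?_ (.of_forall fun n => ?_)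
    · simpa using (tendsto_const_nhds (x := A)).add tendsto_one_div_add_atTop_nhds_zero_nat
    · simp only [mem_Ioi, lt_add_iff_pos_right]
      positivity
  · exact tendsto_atTop_add_const_left _ _
      (tendsto_natCast_atTop_atTop.atTop_add tendsto_const_nhds)
  · simp only [lt_add_iff_pos_right]
    positivity
  · have hn : (0 : ℝ) ≤ n := n.cast_nonneg
    have : 1 / ((n : ℝ) + 1) ≤ 1 := div_le_one_of_le₀ (by linarith) (by positivity)
    dsimp only
    linarith

theorem integrableOn_and_integral_Ioi_of_hasDerivAt_sub_of_nonneg {A fa fb : ℝ}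
    {F h T : ℝ → ℝ} (hderiv : ∀ x ∈ Ioi A, HasDerivAt F (h x - T x) x)
    (hh : ContinuousOn h (Ioi A)) (hh0 : ∀ x ∈ Ioi A, 0 ≤ h x) (hT : IntegrableOn T (Ioi A))
    (hFa : Tendsto F (𝓝[>] A) (𝓝 fa)) (hFb : Tendsto F atTop (𝓝 fb)) :
    IntegrableOn h (Ioi A) ∧ ∫ x in Ioi A, h x = (∫ x in Ioi A, T x) + (fb - fa) := by
  obtain ⟨a, b, ha, hb, hab⟩ := exists_seq_tendsto_nhdsGT_atTop A
  have hsub : ∀ n, Icc (a n) (b n) ⊆ Ioi A := fun n _ hx => (hab n).1.trans_le hx.1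
  have hφ : AECover (volume.restrict (Ioi A)) atTop fun n => Ioc (a n) (b n) :=
    (aecover_Ioi_of_Ioi (ha.mono_right nhdsWithin_le_nhds)).inter (aecover_Iic hb)
  have hrestrict : ∀ n, (volume.restrict (Ioi A)).restrict (Ioc (a n) (b n)) =
      volume.restrict (Ioc (a n) (b n)) := fun n =>
    Measure.restrict_restrict_of_subset (Ioc_subset_Icc_self.trans (hsub n))
  have hhi : ∀ n, IntegrableOn h (Ioc (a n) (b n)) :=
    fun n => ((hh.mono (hsub n)).integrableOn_Icc).mono_set Ioc_subset_Icc_self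
  have hftc : ∀ n, ∫ x in Ioc (a n) (b n), h x =
      (∫ x in Ioc (a n) (b n), T x) + (F (b n) - F (a n)) := fun n => by
    have hhI : IntervalIntegrable h volume (a n) (b n) :=
      (intervalIntegrable_iff_integrableOn_Ioc_of_le (hab n).2).2 (hhi n)
    have hTI : IntervalIntegrable T volume (a n) (b n) :=
      (intervalIntegrable_iff_integrableOn_Ioc_of_le (hab n).2).2
        (hT.mono_set (Ioc_subset_Icc_self.trans (hsub n)))
    have := intervalIntegral.integral_eq_sub_of_hasDerivAt
      (fun x hx => hderiv x (hsub n (by rwa [uIcc_of_le (hab n).2] at hx))) (hhI.sub hTI)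
    rw [intervalIntegral.integral_sub hhI hTI, intervalIntegral.integral_of_le (hab n).2,
      intervalIntegral.integral_of_le (hab n).2] at this
    linarith
  have hlim : Tendsto (fun n => ∫ x in Ioc (a n) (b n), h x ∂(volume.restrict (Ioi A))) atTop
      (𝓝 ((∫ x in Ioi A, T x) + (fb - fa))) := by
    simp only [hrestrict, hftc]
    refine ((hφ.integral_tendsto_of_countably_generated hT).congr fun n => ?_).add
      ((hFb.comp hb).sub (hFa.comp ha))
    rw [hrestrict]
  have hint : IntegrableOn h (Ioi A) :=
    hφ.integrable_of_integral_tendsto_of_nonneg_ae _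
      (fun n => by rw [IntegrableOn, hrestrict]; exact hhi n)
      ((ae_restrict_iff' measurableSet_Ioi).2 (.of_forall hh0)) hlim
  exact ⟨hint, hφ.integral_eq_of_tendsto _ hint hlim⟩

def kummerResidual (μ b : ℝ) (g : ℝ → ℝ) (x : ℝ) : ℝ :=
  x * deriv (deriv g) x + (x + μ) * deriv g x + (μ - b) * g x

def energyDensity (μ ε c : ℝ) (g : ℝ → ℝ) (x : ℝ) : ℝ :=
  (deriv (deriv g) x) ^ 2 * x ^ (μ + 1) + (x ^ 2 * (deriv g x) ^ 2 - ε * (g x) ^ 2) * x ^ (μ - 1)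
    - c * ((deriv g x) ^ 2 * x ^ μ)

def boundaryTerm (μ b : ℝ) (g : ℝ → ℝ) (x : ℝ) : ℝ :=
  x ^ μ * ((deriv g x) ^ 2 * (x + μ) + (μ - b) * ((g x) ^ 2 + 2 * deriv g x * g x))

section

variable {μ b : ℝ} {g : ℝ → ℝ}

theorem hasDerivAt_boundaryTerm (hg : ContDiffOn ℝ 2 g (Ioi 0)) {x : ℝ} (hx : 0 < x) :
    HasDerivAt (boundaryTerm μ b g) (kummerResidual μ b g x ^ 2 * x ^ (μ - 1) -
      energyDensity μ (μ * b - b ^ 2) (μ - 2 * b + 1) g x) x := by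
  have hd : DifferentiableAt ℝ g x :=
    (hg.contDiffAt (isOpen_Ioi.mem_nhds hx)).differentiableAt (by norm_num)
  have hd' : DifferentiableAt ℝ (deriv g) x :=
    ((hg.deriv_of_isOpen isOpen_Ioi (m := 1) (by norm_num)).contDiffAt
      (isOpen_Ioi.mem_nhds hx)).differentiableAt one_ne_zero
  have hpow : HasDerivAt (fun y : ℝ => y ^ μ) (μ * x ^ (μ - 1)) x :=
    Real.hasDerivAt_rpow_const (Or.inl hx.ne')
  have H := hpow.mul (((hd'.hasDerivAt.pow 2).mul ((hasDerivAt_id x).add_const μ)).add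
    (((hd.hasDerivAt.pow 2).add ((hd'.hasDerivAt.const_mul 2).mul hd.hasDerivAt)).const_mul
      (μ - b)))
  refine H.congr_deriv ?_
  have e0 : x ^ μ = x ^ (μ - 1) * x := by
    rw [← Real.rpow_add_one hx.ne', sub_add_cancel]
  have e1 : x ^ (μ + 1) = x ^ (μ - 1) * x * x := by
    rw [Real.rpow_add_one hx.ne', e0]
  simp only [kummerResidual, energyDensity, e0, e1, id, Pi.pow_apply, Pi.mul_apply, Pi.add_apply]
  ring

theorem continuousOn_kummerResidual (hg : ContDiffOn ℝ 2 g (Ioi 0)) :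
    ContinuousOn (kummerResidual μ b g) (Ioi 0) := by
  have hg' : ContDiffOn ℝ 1 (deriv g) (Ioi 0) := hg.deriv_of_isOpen isOpen_Ioi (by norm_num)
  have hg'' : ContinuousOn (deriv (deriv g)) (Ioi 0) :=
    hg'.continuousOn_deriv_of_isOpen isOpen_Ioi le_rfl
  exact ((continuousOn_id.mul hg'').add ((continuousOn_id.add continuousOn_const).mul
    hg'.continuousOn)).add (continuousOn_const.mul hg.continuousOn)

end

namespace FiniteDmu

variable {μ : ℝ} {g : ℝ → ℝ}

theorem integrableOn_deriv_sq_mul_rpow_add_one_s15 (hD : FiniteDmu μ g) :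
    IntegrableOn (fun x => (deriv g x) ^ 2 * x ^ (μ + 1)) (Ioi 0) := by
  refine hD.2.1.mono' (by fun_prop)
    ((ae_restrict_iff' measurableSet_Ioi).2 (.of_forall fun x hx => ?_))
  have hx : (0 : ℝ) < x := hx
  rw [Real.norm_of_nonneg (by positivity), Real.rpow_add_one hx.ne']
  have := Real.rpow_nonneg hx.le μ
  nlinarith [mul_nonneg (sq_nonneg (deriv g x)) this]

theorem integrableOn_deriv_sq_mul_rpow_s15 (hD : FiniteDmu μ g) :
    IntegrableOn (fun x => (deriv g x) ^ 2 * x ^ μ) (Ioi 0) := by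
  refine hD.2.1.mono' (by fun_prop)
    ((ae_restrict_iff' measurableSet_Ioi).2 (.of_forall fun x hx => ?_))
  have hx : (0 : ℝ) < x := hx
  rw [Real.norm_of_nonneg (by positivity)]
  nlinarith [mul_nonneg (mul_nonneg (sq_nonneg (deriv g x)) hx.le) (Real.rpow_nonneg hx.le μ)]

theorem integrableOn_P1_integrand (hD : FiniteDmu μ g) (ε : ℝ) :
    IntegrableOn (fun x => (x ^ 2 * (deriv g x) ^ 2 - ε * (g x) ^ 2) * x ^ (μ - 1)) (Ioi 0) := by
  refine (hD.integrableOn_deriv_sq_mul_rpow_add_one_s15.sub (hD.2.2.const_mul ε)).congr_fun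
    (fun x hx => ?_) measurableSet_Ioi
  have hx : (0 : ℝ) < x := hx
  have e : x ^ (μ + 1) = x ^ 2 * x ^ (μ - 1) := by
    rw [show μ + 1 = 2 + (μ - 1) by ring, Real.rpow_add hx, Real.rpow_two]
  simp only [Pi.sub_apply, e]
  ring

theorem integrableOn_energyDensity (hD : FiniteDmu μ g) (ε c : ℝ) :
    IntegrableOn (energyDensity μ ε c g) (Ioi 0) :=
  (hD.1.add (hD.integrableOn_P1_integrand ε)).sub (hD.integrableOn_deriv_sq_mul_rpow_s15.const_mul c)

theorem integral_energyDensity (hD : FiniteDmu μ g) (ε c : ℝ) :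
    ∫ x in Ioi 0, energyDensity μ ε c g x = Q μ g + P1 μ ε g - c * P0 μ g := by
  have hQP : IntegrableOn (fun x => (deriv (deriv g) x) ^ 2 * x ^ (μ + 1) +
      (x ^ 2 * (deriv g x) ^ 2 - ε * (g x) ^ 2) * x ^ (μ - 1)) (Ioi 0) :=
    hD.1.add (hD.integrableOn_P1_integrand ε)
  unfold energyDensity
  rw [integral_sub hQP (hD.integrableOn_deriv_sq_mul_rpow_s15.const_mul c),
    integral_add hD.1 (hD.integrableOn_P1_integrand ε), integral_const_mul, Q, P1, P0]

end FiniteDmu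

namespace BoundaryB

open Asymptotics

variable {μ : ℝ} {g : ℝ → ℝ}

theorem tendsto_boundaryTerm_nhdsGT_zero (hμ : 0 < μ) (hB : BoundaryB μ g) (b : ℝ) :
    Tendsto (boundaryTerm μ b g) (𝓝[>] 0) (𝓝 0) := by
  obtain ⟨M, hM⟩ := hB.1
  have hM' : ∀ᶠ x in 𝓝[>] 0, ‖g x‖ ≤ M * ‖(1 : ℝ)‖ ∧ ‖deriv g x‖ ≤ M * ‖(1 : ℝ)‖ :=
    hM.mono fun x hx => by
      rw [norm_one, mul_one, Real.norm_eq_abs, Real.norm_eq_abs]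
      constructor <;> linarith [abs_nonneg (g x), abs_nonneg (deriv g x)]
  have hw : g =O[𝓝[>] 0] (fun _ => (1 : ℝ)) := .of_bound M (hM'.mono fun _ h => h.1)
  have hv : deriv g =O[𝓝[>] 0] (fun _ => (1 : ℝ)) := .of_bound M (hM'.mono fun _ h => h.2)
  have hx : (fun x : ℝ => x + μ) =O[𝓝[>] 0] (fun _ => (1 : ℝ)) :=
    (((continuous_add_const μ).tendsto 0).mono_left nhdsWithin_le_nhds).isBigO_one ℝ
  have hv2 : (fun x => (deriv g x) ^ 2) =O[𝓝[>] 0] (fun _ => (1 : ℝ)) := by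
    simpa using hv.pow 2
  have hw2 : (fun x => (g x) ^ 2) =O[𝓝[>] 0] (fun _ => (1 : ℝ)) := by
    simpa using hw.pow 2
  have hvw : (fun x => 2 * deriv g x * g x) =O[𝓝[>] 0] (fun _ => (1 : ℝ)) := by
    simpa using (hv.const_mul_left 2).mul hw
  have hv2x : (fun x => (deriv g x) ^ 2 * (x + μ)) =O[𝓝[>] 0] (fun _ => (1 : ℝ)) := by
    simpa using hv2.mul hx
  have hK : (fun x => (deriv g x) ^ 2 * (x + μ) + (μ - b) * ((g x) ^ 2 + 2 * deriv g x * g x))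
      =O[𝓝[>] 0] (fun _ => (1 : ℝ)) :=
    hv2x.add ((hw2.add hvw).const_mul_left _)
  have hpow : Tendsto (fun x : ℝ => x ^ μ) (𝓝[>] 0) (𝓝 0) := by
    simpa [Real.zero_rpow hμ.ne'] using
      (Real.continuousAt_rpow_const 0 μ (Or.inr hμ.le)).tendsto.mono_left nhdsWithin_le_nhds
  exact ((isBigO_refl _ _).mul hK).trans_tendsto (by simpa using hpow)

theorem tendsto_boundaryTerm_atTop (hB : BoundaryB μ g) (b : ℝ) :
    Tendsto (boundaryTerm μ b g) atTop (𝓝 0) := by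
  have hnn : ∀ᶠ x : ℝ in atTop, 0 ≤ x ^ (μ + 1) * (deriv g x) ^ 2 ∧ 0 ≤ x ^ μ * (g x) ^ 2 :=
    (eventually_ge_atTop 0).mono fun x hx => ⟨by positivity, by positivity⟩
  have hV1 : Tendsto (fun x => x ^ (μ + 1) * (deriv g x) ^ 2) atTop (𝓝 0) :=
    tendsto_of_tendsto_of_tendsto_of_le_of_le' tendsto_const_nhds hB.2 (hnn.mono fun _ h => h.1)
      (hnn.mono fun _ h => by linarith [h.2])
  have hW : Tendsto (fun x => x ^ μ * (g x) ^ 2) atTop (𝓝 0) :=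
    tendsto_of_tendsto_of_tendsto_of_le_of_le' tendsto_const_nhds hB.2 (hnn.mono fun _ h => h.2)
      (hnn.mono fun _ h => by linarith [h.1])
  have hV : Tendsto (fun x => x ^ μ * (deriv g x) ^ 2) atTop (𝓝 0) := by
    refine tendsto_of_tendsto_of_tendsto_of_le_of_le' tendsto_const_nhds hV1
      ((eventually_ge_atTop 0).mono fun x hx => by positivity)
      ((eventually_ge_atTop 1).mono fun x hx => ?_)
    exact mul_le_mul_of_nonneg_right (Real.rpow_le_rpow_of_exponent_le hx (by linarith))
      (sq_nonneg _)
  have hVW : Tendsto (fun x => x ^ μ * (2 * deriv g x * g x)) atTop (𝓝 0) := by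
    refine squeeze_zero_norm' ((eventually_ge_atTop 0).mono fun x hx => ?_)
      (by simpa using hV.add hW)
    have hp := Real.rpow_nonneg hx μ
    rw [Real.norm_eq_abs, abs_le]
    constructor
    · nlinarith [mul_nonneg hp (sq_nonneg (deriv g x + g x))]
    · nlinarith [mul_nonneg hp (sq_nonneg (deriv g x - g x))]
  have hsum := (hV1.add (hV.const_mul μ)).add ((hW.add hVW).const_mul (μ - b))
  simp only [mul_zero, add_zero] at hsum
  refine hsum.congr' ((eventually_gt_atTop 0).mono fun x hx => ?_)
  rw [boundaryTerm, Real.rpow_add_one hx.ne']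
  ring

end BoundaryB

theorem stmt_15_general (μ ε : ℝ) (hμ : 0 < μ) (hεμ : ε < μ ^ 2 / 4)
    (b : ℝ) (hb : b = (μ - Real.sqrt (μ ^ 2 - 4 * ε)) / 2)
    (g : ℝ → ℝ) (hg : ContDiffOn ℝ (⊤ : ℕ∞) g (Set.Ioi 0))
    (hB : BoundaryB μ g) (hD : FiniteDmu μ g)
    (heq : Q μ g + P1 μ ε g = (Real.sqrt (μ ^ 2 - 4 * ε) + 1) * P0 μ g) :
    ∀ x : ℝ, 0 < x →
      x * deriv (deriv g) x + (x + μ) * deriv g x + (μ - b) * g x = 0 := by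
  have hsqrt : √(μ ^ 2 - 4 * ε) = μ - 2 * b := by rw [hb]; ring
  have hε : ε = μ * b - b ^ 2 := by
    have := Real.sq_sqrt (show 0 ≤ μ ^ 2 - 4 * ε by linarith)
    rw [hsqrt] at this
    linarith
  rw [hsqrt] at heq
  subst hε
  have hg2 : ContDiffOn ℝ 2 g (Ioi 0) := hg.of_le (WithTop.coe_le_coe.2 le_top)
  have hres : ContinuousOn (fun x => kummerResidual μ b g x ^ 2 * x ^ (μ - 1)) (Ioi 0) :=
    ((continuousOn_kummerResidual hg2).pow 2).mul
      (continuousOn_id.rpow_const fun x hx => Or.inl (ne_of_gt hx))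
  obtain ⟨hint, hI⟩ := integrableOn_and_integral_Ioi_of_hasDerivAt_sub_of_nonneg
    (fun x hx => hasDerivAt_boundaryTerm hg2 hx) hres
    (fun x (hx : 0 < x) => by positivity) (hD.integrableOn_energyDensity _ _)
    (hB.tendsto_boundaryTerm_nhdsGT_zero hμ b) (hB.tendsto_boundaryTerm_atTop b)
  rw [hD.integral_energyDensity, heq, sub_self, sub_self, add_zero] at hI
  have hae := (setIntegral_eq_zero_iff_of_nonneg_ae ((ae_restrict_iff' measurableSet_Ioi).2
    (.of_forall fun x (hx : 0 < x) => by positivity)) hint).1 hI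
  intro x hx
  simpa [kummerResidual, (Real.rpow_pos_of_pos hx _).ne'] using
    Measure.eqOn_open_of_ae_eq hae isOpen_Ioi hres continuousOn_const hx

/-- Equality in the additive one-dimensional inequality forces the Kummer-type ODE
`x g'' + (x+μ) g' + (μ−b) g = 0` on `(0,∞)`, where `b = (μ − √(μ²−4ε))/2`. -/
theorem stmt_15 (μ ε : ℝ) (hμ : 0 < μ) (hε : 0 < ε) (hεμ : ε < μ ^ 2 / 4)
    (b : ℝ) (hb : b = (μ - Real.sqrt (μ ^ 2 - 4 * ε)) / 2)
    (g : ℝ → ℝ) (hg : ContDiffOn ℝ (⊤ : ℕ∞) g (Set.Ioi 0))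
    (hB : BoundaryB μ g) (hD : FiniteDmu μ g)
    (heq : Q μ g + P1 μ ε g = (Real.sqrt (μ ^ 2 - 4 * ε) + 1) * P0 μ g) :
    ∀ x : ℝ, 0 < x →
      x * deriv (deriv g) x + (x + μ) * deriv g x + (μ - b) * g x = 0 :=
  stmt_15_general μ ε hμ hεμ b hb g hg hB hD heq
end
end

section
/- Let μ > 2 and let g : (0,∞) → ℝ be a smooth function satisfying the boundary conditions (B) and having finite D_μ-norm. Then for every δ > 0 there exists a smooth function h compactly supported in (0,∞) such that ∫₀^∞ ((g−h)'')² x^{μ+1} dx + ∫₀^∞ ((g−h)')² (x+1) x^μ dx + ∫₀^∞ (g−h)² x^{μ−1} dx < δ. -/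
/-!
Write `g - h = g ψ` with `ψ x = 1 - χ (x / ε) + χ (x / R)`, where `χ` is a smooth step from `0`
on `(-∞, 1]` to `1` on `[2, ∞)`; then `h = g (χ (· / ε) - χ (· / R))` is smooth and supported in
`[ε, 2R]`. The weights of the `D_μ`-norm are homogeneous, and `|ψ|`, `|x ψ'|`, `|x² ψ''|` are
bounded independently of `ε` and `R`. By the Leibniz rule the `D_μ`-density of `g ψ` is therefore
at most a constant times that of `g` for `x ≥ R`, at most a constant times that of `g` plus
`M² x^(μ-3)` for `x ≤ 2ε` (where `M` bounds `|g|` and `|g'|` near `0` by (B)), and it vanishes in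
between. Since `μ > 2`, `x^(μ-3)` is integrable at `0`, so both contributions tend to `0` as
`ε → 0` and `R → ∞`.
-/

open MeasureTheory Filter

noncomputable section

open Set Real Topology Function
open scoped ContDiff

theorem deriv_deriv_mul {𝕜 : Type*} [NontriviallyNormedField 𝕜] {f g : 𝕜 → 𝕜} {x : 𝕜}
    (hf : ContDiffAt 𝕜 2 f x) (hg : ContDiffAt 𝕜 2 g x) :
    deriv (deriv fun y => f y * g y) x =
      deriv (deriv f) x * g x + 2 * (deriv f x * deriv g x) + f x * deriv (deriv g) x := by
  have h := iteratedDeriv_mul hf hg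
  simp only [iteratedDeriv_succ, iteratedDeriv_zero, Nat.reduceAdd, Finset.sum_range_succ,
    Finset.range_one, Finset.sum_singleton, Nat.choose_zero_right, Nat.cast_one, one_mul,
    tsub_zero, Nat.choose_succ_self_right, Nat.cast_ofNat, Nat.add_one_sub_one, Nat.choose_self,
    tsub_self] at h
  rw [show (fun y => f y * g y) = f * g from rfl, h]
  ring

theorem ContDiffOn.contDiff_mul_of_tsupport_subset {𝕜 E : Type*} [NontriviallyNormedField 𝕜]
    [NormedAddCommGroup E] [NormedSpace 𝕜 E] {n : WithTop ℕ∞} {f φ : E → 𝕜} {s : Set E}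
    (hf : ContDiffOn 𝕜 n f s) (hs : IsOpen s) (hφ : ContDiff 𝕜 n φ) (hφs : tsupport φ ⊆ s) :
    ContDiff 𝕜 n fun x => f x * φ x := by
  refine contDiff_iff_contDiffAt.mpr fun x => ?_
  by_cases hx : x ∈ s
  · exact (hf.contDiffAt (hs.mem_nhds hx)).mul hφ.contDiffAt
  · refine contDiffAt_const (c := 0).congr_of_eventuallyEq ?_
    filter_upwards [notMem_tsupport_iff_eventuallyEq.mp fun h => hx (hφs h)] with y hy
    simp [hy]

theorem integral_add_add_le_of_le {α : Type*} [MeasurableSpace α] {ν : Measure α}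
    {f₀ f₁ f₂ G : α → ℝ} (hG : Integrable G ν) (hm₀ : AEStronglyMeasurable f₀ ν)
    (hm₁ : AEStronglyMeasurable f₁ ν) (hm₂ : AEStronglyMeasurable f₂ ν) (h₀ : ∀ᵐ x ∂ν, 0 ≤ f₀ x)
    (h₁ : ∀ᵐ x ∂ν, 0 ≤ f₁ x) (h₂ : ∀ᵐ x ∂ν, 0 ≤ f₂ x) (hle : ∀ᵐ x ∂ν, f₀ x + f₁ x + f₂ x ≤ G x) :
    ∫ x, f₀ x ∂ν + ∫ x, f₁ x ∂ν + ∫ x, f₂ x ∂ν ≤ ∫ x, G x ∂ν := by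
  have hi₀ : Integrable f₀ ν := integrable_of_le_of_le hm₀ h₀
    (by filter_upwards [h₁, h₂, hle] with x _ _ _; linarith) (integrable_zero _ _ _) hG
  have hi₁ : Integrable f₁ ν := integrable_of_le_of_le hm₁ h₁
    (by filter_upwards [h₀, h₂, hle] with x _ _ _; linarith) (integrable_zero _ _ _) hG
  have hi₂ : Integrable f₂ ν := integrable_of_le_of_le hm₂ h₂
    (by filter_upwards [h₀, h₁, hle] with x _ _ _; linarith) (integrable_zero _ _ _) hG
  rw [← integral_add hi₀ hi₁, ← integral_add (f := fun x => f₀ x + f₁ x) (hi₀.add hi₁) hi₂]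
  exact integral_mono_ae ((hi₀.add hi₁).add hi₂) hG hle

theorem tendsto_setIntegral_Ioc_nhdsGT_zero {f : ℝ → ℝ} {b : ℝ} (hb : 0 < b)
    (hf : IntegrableOn f (Ioc 0 b)) :
    Tendsto (fun a => ∫ x in Ioc 0 a, f x) (𝓝[>] 0) (𝓝 0) := by
  have hvol : Tendsto (fun a : ℝ => volume (Ioc 0 a)) (𝓝[>] 0) (𝓝 0) := by
    simpa using ENNReal.tendsto_ofReal (tendsto_nhdsWithin_of_tendsto_nhds
      (tendsto_id (x := 𝓝 (0 : ℝ))))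
  refine (((integrable_indicator_iff measurableSet_Ioc).mpr hf).tendsto_setIntegral_nhds_zero
    hvol).congr' ?_
  filter_upwards [eventually_nhdsWithin_of_eventually_nhds (eventually_lt_nhds hb)] with a ha
  exact setIntegral_congr_fun measurableSet_Ioc fun x hx =>
    indicator_of_mem (show x ∈ Ioc 0 b from ⟨hx.1, hx.2.trans ha.le⟩) f

theorem tendsto_setIntegral_Ici_atTop {f : ℝ → ℝ} {a : ℝ} (hf : IntegrableOn f (Ici a)) :
    Tendsto (fun R => ∫ x in Ici R, f x) atTop (𝓝 0) := by
  have hempty : ⋂ R : ℝ, Ici R = ∅ :=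
    iInter_eq_empty_iff.mpr fun x => ⟨x + 1, by simp⟩
  simpa [hempty] using tendsto_setIntegral_of_antitone (fun _ => measurableSet_Ici)
    (fun _ _ h => Ici_subset_Ici.mpr h) ⟨a, hf⟩

theorem rpow_eq_pow_mul_rpow_sub_three {x : ℝ} (hx : x ≠ 0) (μ : ℝ) :
    x ^ (μ - 2) = x * x ^ (μ - 3) ∧ x ^ (μ - 1) = x ^ 2 * x ^ (μ - 3) ∧
      x ^ μ = x ^ 3 * x ^ (μ - 3) ∧ x ^ (μ + 1) = x ^ 4 * x ^ (μ - 3) := by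
  have h (n : ℕ) {ν : ℝ} (hν : ν = μ - 3 + n) : x ^ ν = x ^ n * x ^ (μ - 3) := by
    rw [hν, rpow_add_natCast hx, mul_comm]
  exact ⟨by simpa using h 1 (by push_cast; ring), h 2 (by push_cast; ring),
    h 3 (by push_cast; ring), h 4 (by push_cast; ring)⟩

-- `dmuDensity μ (f * ψ) x / x ^ (μ - 3)` expanded by the Leibniz rule, where `aᵢ` and `pᵢ` stand
-- for the `i`-th derivatives of `f` and `ψ` at `x`.
theorem leibniz_sq_le {A x a₀ a₁ a₂ p₀ p₁ p₂ : ℝ} (hx : 0 ≤ x) (h₀ : |p₀| ≤ A)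
    (h₁ : |x * p₁| ≤ A) (h₂ : |x ^ 2 * p₂| ≤ A) :
    (a₂ * p₀ + 2 * (a₁ * p₁) + a₀ * p₂) ^ 2 * x ^ 4 + (a₁ * p₀ + a₀ * p₁) ^ 2 * ((x + 1) * x ^ 3)
        + (a₀ * p₀) ^ 2 * x ^ 2 ≤
      12 * A ^ 2 * (a₂ ^ 2 * x ^ 4 + a₁ ^ 2 * (x ^ 2 + (x + 1) * x ^ 3)
        + a₀ ^ 2 * (1 + (x + 1) * x + x ^ 2)) := by
  have s₀ : p₀ ^ 2 ≤ A ^ 2 := sq_le_sq' (abs_le.mp h₀).1 (abs_le.mp h₀).2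
  have s₁ : (x * p₁) ^ 2 ≤ A ^ 2 := sq_le_sq' (abs_le.mp h₁).1 (abs_le.mp h₁).2
  have s₂ : (x ^ 2 * p₂) ^ 2 ≤ A ^ 2 := sq_le_sq' (abs_le.mp h₂).1 (abs_le.mp h₂).2
  have c₃ (u v w : ℝ) : (u + v + w) ^ 2 ≤ 3 * (u ^ 2 + v ^ 2 + w ^ 2) := by
    nlinarith [sq_nonneg (u - v), sq_nonneg (u - w), sq_nonneg (v - w)]
  have c₂ (u v : ℝ) : (u + v) ^ 2 ≤ 2 * (u ^ 2 + v ^ 2) := by nlinarith [sq_nonneg (u - v)]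
  calc _ = (a₂ * x ^ 2 * p₀ + 2 * (a₁ * x) * (x * p₁) + a₀ * (x ^ 2 * p₂)) ^ 2
          + (a₁ * x * p₀ + a₀ * (x * p₁)) ^ 2 * ((x + 1) * x) + (a₀ * x) ^ 2 * p₀ ^ 2 := by ring
    _ ≤ 3 * ((a₂ * x ^ 2) ^ 2 * p₀ ^ 2 + 4 * (a₁ * x) ^ 2 * (x * p₁) ^ 2
            + a₀ ^ 2 * (x ^ 2 * p₂) ^ 2)
          + 2 * ((a₁ * x) ^ 2 * p₀ ^ 2 + a₀ ^ 2 * (x * p₁) ^ 2) * ((x + 1) * x)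
          + (a₀ * x) ^ 2 * p₀ ^ 2 := by
      gcongr
      · exact (c₃ _ _ _).trans_eq (by ring)
      · exact (c₂ _ _).trans_eq (by ring)
    _ ≤ 3 * ((a₂ * x ^ 2) ^ 2 * A ^ 2 + 4 * (a₁ * x) ^ 2 * A ^ 2 + a₀ ^ 2 * A ^ 2)
          + 2 * ((a₁ * x) ^ 2 * A ^ 2 + a₀ ^ 2 * A ^ 2) * ((x + 1) * x)
          + (a₀ * x) ^ 2 * A ^ 2 := by gcongr
    _ ≤ _ := by
      have : 0 ≤ A ^ 2 * a₂ ^ 2 * x ^ 4 := by positivity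
      have : 0 ≤ A ^ 2 * a₁ ^ 2 * ((x + 1) * x ^ 3) := by positivity
      have : 0 ≤ A ^ 2 * a₀ ^ 2 * ((x + 1) * x) := by positivity
      nlinarith

def smoothStep (t : ℝ) : ℝ := smoothTransition (t - 1)

theorem contDiff_smoothStep : ContDiff ℝ ∞ smoothStep :=
  smoothTransition.contDiff.comp (contDiff_id.sub contDiff_const)

theorem smoothStep_of_le_one {t : ℝ} (ht : t ≤ 1) : smoothStep t = 0 :=
  smoothTransition.zero_of_nonpos (by linarith)

theorem smoothStep_of_two_le {t : ℝ} (ht : 2 ≤ t) : smoothStep t = 1 :=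
  smoothTransition.one_of_one_le (by linarith)

theorem smoothStep_mem_Icc (t : ℝ) : smoothStep t ∈ Icc 0 1 :=
  ⟨smoothTransition.nonneg _, smoothTransition.le_one _⟩

theorem support_deriv_smoothStep_subset : support (deriv smoothStep) ⊆ Icc 1 2 := by
  intro t ht
  by_contra hmem
  refine ht ?_
  rcases not_and_or.mp hmem with h | h
  · have : smoothStep =ᶠ[𝓝 t] fun _ => 0 :=
      eventually_lt_nhds (not_le.mp h) |>.mono fun s hs => smoothStep_of_le_one hs.le
    simp [this.deriv_eq]
  · have : smoothStep =ᶠ[𝓝 t] fun _ => 1 :=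
      eventually_gt_nhds (not_le.mp h) |>.mono fun s hs => smoothStep_of_two_le hs.le
    simp [this.deriv_eq]

theorem differentiable_deriv_smoothStep : Differentiable ℝ (deriv smoothStep) :=
  (contDiff_smoothStep.iterate_deriv 1).differentiable (by simp)

theorem exists_abs_mul_deriv_smoothStep_le :
    ∃ B, ∀ t, |t * deriv smoothStep t| ≤ B ∧ |t ^ 2 * deriv (deriv smoothStep) t| ≤ B := by
  have h₁ : HasCompactSupport (deriv smoothStep) :=
    HasCompactSupport.intro isCompact_Icc fun t ht => notMem_support.mp
      fun h => ht (support_deriv_smoothStep_subset h)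
  obtain ⟨B₁, hB₁⟩ := (h₁.mul_left (f := id)).exists_bound_of_continuous
    (continuous_id.mul (contDiff_smoothStep.continuous_deriv (by simp)))
  obtain ⟨B₂, hB₂⟩ := (h₁.deriv.mul_left (f := (· ^ 2))).exists_bound_of_continuous
    ((continuous_pow 2).mul ((contDiff_smoothStep.iterate_deriv 2).continuous))
  exact ⟨max B₁ B₂, fun t => ⟨(hB₁ t).trans (le_max_left _ _), (hB₂ t).trans (le_max_right _ _)⟩⟩

theorem deriv_smoothStep_comp_mul (c : ℝ) :
    deriv (fun y => smoothStep (c * y)) = fun x => c * deriv smoothStep (c * x) :=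
  funext fun x => by simpa using deriv_comp_mul_left c smoothStep x

theorem deriv_deriv_smoothStep_comp_mul (c : ℝ) :
    deriv (deriv fun y => smoothStep (c * y)) =
      fun x => c ^ 2 * deriv (deriv smoothStep) (c * x) := by
  rw [deriv_smoothStep_comp_mul, deriv_const_mul_field']
  funext x
  rw [show (fun y => deriv smoothStep (c * y)) = (deriv smoothStep <| c * ·) from rfl,
    deriv_comp_mul_left, smul_eq_mul]
  ring

def cutoff (ε R x : ℝ) : ℝ := smoothStep (ε⁻¹ * x) - smoothStep (R⁻¹ * x)

theorem contDiff_cutoff (ε R : ℝ) : ContDiff ℝ ∞ (cutoff ε R) :=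
  (contDiff_smoothStep.comp (contDiff_const.mul contDiff_id)).sub
    (contDiff_smoothStep.comp (contDiff_const.mul contDiff_id))

section Cutoff

variable {ε R x : ℝ}

theorem cutoff_eq_zero_of_le (hε : 0 < ε) (hεR : ε ≤ R) (hx : x ≤ ε) : cutoff ε R x = 0 := by
  have hR : 0 < R := hε.trans_le hεR
  rw [cutoff, smoothStep_of_le_one, smoothStep_of_le_one, sub_zero]
  · rw [inv_mul_le_iff₀ hR]; linarith
  · rw [inv_mul_le_iff₀ hε]; linarith

theorem cutoff_eq_zero_of_two_mul_le (hε : 0 < ε) (hεR : ε ≤ R) (hx : 2 * R ≤ x) :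
    cutoff ε R x = 0 := by
  have hR : 0 < R := hε.trans_le hεR
  rw [cutoff, smoothStep_of_two_le, smoothStep_of_two_le, sub_self]
  · rw [le_inv_mul_iff₀ hR]; linarith
  · rw [le_inv_mul_iff₀ hε]; linarith

theorem tsupport_cutoff_subset (hε : 0 < ε) (hεR : ε ≤ R) :
    tsupport (cutoff ε R) ⊆ Icc ε (2 * R) := by
  refine closure_minimal (fun x hx => ⟨not_lt.mp fun h => hx ?_, not_lt.mp fun h => hx ?_⟩)
    isClosed_Icc
  exacts [cutoff_eq_zero_of_le hε hεR h.le, cutoff_eq_zero_of_two_mul_le hε hεR h.le]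

theorem cutoff_eventuallyEq_one (hε : 0 < ε) (hx : 2 * ε < x) (hxR : x < R) :
    cutoff ε R =ᶠ[𝓝 x] 1 := by
  have hR : 0 < R := by linarith
  filter_upwards [eventually_gt_nhds hx, eventually_lt_nhds hxR] with y hy hyR
  rw [cutoff, smoothStep_of_two_le, smoothStep_of_le_one, Pi.one_apply, sub_zero]
  · rw [inv_mul_le_iff₀ hR]; linarith
  · rw [le_inv_mul_iff₀ hε]; linarith

end Cutoff

theorem deriv_one_sub_cutoff (ε R : ℝ) :
    deriv (fun y => 1 - cutoff ε R y) =
      fun x => R⁻¹ * deriv smoothStep (R⁻¹ * x) - ε⁻¹ * deriv smoothStep (ε⁻¹ * x) := by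
  have hd (c : ℝ) : Differentiable ℝ fun y => smoothStep (c * y) :=
    (contDiff_smoothStep.comp (contDiff_const.mul contDiff_id)).differentiable (by simp)
  funext x
  simp only [deriv_const_sub, cutoff]
  rw [deriv_fun_sub (hd _ x) (hd _ x), deriv_smoothStep_comp_mul, deriv_smoothStep_comp_mul,
    neg_sub]

theorem deriv_deriv_one_sub_cutoff (ε R : ℝ) :
    deriv (deriv fun y => 1 - cutoff ε R y) =
      fun x => R⁻¹ ^ 2 * deriv (deriv smoothStep) (R⁻¹ * x) -
        ε⁻¹ ^ 2 * deriv (deriv smoothStep) (ε⁻¹ * x) := by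
  have hd (c : ℝ) : Differentiable ℝ fun x => c * deriv smoothStep (c * x) := by
    have := differentiable_deriv_smoothStep
    fun_prop
  funext x
  rw [deriv_one_sub_cutoff, deriv_fun_sub (hd _ x) (hd _ x), ← deriv_smoothStep_comp_mul,
    ← deriv_smoothStep_comp_mul, deriv_deriv_smoothStep_comp_mul,
    deriv_deriv_smoothStep_comp_mul]

-- Uniform in `ε` and `R`: for `ψ = 1 - cutoff ε R`, `x ψ'` and `x² ψ''` are differences of values
-- of `t ↦ t χ' t` and `t ↦ t² χ'' t` (`χ = smoothStep`) at `t = x / ε` and `t = x / R`.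
theorem exists_cutoff_bound : ∃ A, ∀ ε R x : ℝ, |1 - cutoff ε R x| ≤ A ∧
    |x * deriv (fun y => 1 - cutoff ε R y) x| ≤ A ∧
    |x ^ 2 * deriv (deriv fun y => 1 - cutoff ε R y) x| ≤ A := by
  obtain ⟨B, hB⟩ := exists_abs_mul_deriv_smoothStep_le
  refine ⟨max 2 (2 * B), fun ε R x => ⟨?_, ?_, ?_⟩⟩
  · obtain ⟨h₁, h₂⟩ := smoothStep_mem_Icc (ε⁻¹ * x)
    obtain ⟨h₃, h₄⟩ := smoothStep_mem_Icc (R⁻¹ * x)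
    exact (abs_le.mpr ⟨by simp only [cutoff]; linarith, by simp only [cutoff]; linarith⟩).trans
      (le_max_left _ _)
  · rw [deriv_one_sub_cutoff]
    have e : x * (R⁻¹ * deriv smoothStep (R⁻¹ * x) - ε⁻¹ * deriv smoothStep (ε⁻¹ * x)) =
        R⁻¹ * x * deriv smoothStep (R⁻¹ * x) - ε⁻¹ * x * deriv smoothStep (ε⁻¹ * x) := by ring
    rw [e]
    linarith [abs_sub (R⁻¹ * x * deriv smoothStep (R⁻¹ * x)) (ε⁻¹ * x * deriv smoothStep (ε⁻¹ * x)),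
      (hB (R⁻¹ * x)).1, (hB (ε⁻¹ * x)).1, le_max_right 2 (2 * B)]
  · rw [deriv_deriv_one_sub_cutoff]
    have e : x ^ 2 * (R⁻¹ ^ 2 * deriv (deriv smoothStep) (R⁻¹ * x) -
        ε⁻¹ ^ 2 * deriv (deriv smoothStep) (ε⁻¹ * x)) =
        (R⁻¹ * x) ^ 2 * deriv (deriv smoothStep) (R⁻¹ * x) -
          (ε⁻¹ * x) ^ 2 * deriv (deriv smoothStep) (ε⁻¹ * x) := by ring
    rw [e]
    linarith [abs_sub ((R⁻¹ * x) ^ 2 * deriv (deriv smoothStep) (R⁻¹ * x))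
      ((ε⁻¹ * x) ^ 2 * deriv (deriv smoothStep) (ε⁻¹ * x)),
      (hB (R⁻¹ * x)).2, (hB (ε⁻¹ * x)).2, le_max_right 2 (2 * B)]

def dmuDensity (μ : ℝ) (f : ℝ → ℝ) (x : ℝ) : ℝ :=
  deriv (deriv f) x ^ 2 * x ^ (μ + 1) + deriv f x ^ 2 * (x + 1) * x ^ μ + f x ^ 2 * x ^ (μ - 1)

theorem dmuDensity_nonneg {μ x : ℝ} (f : ℝ → ℝ) (hx : 0 ≤ x) : 0 ≤ dmuDensity μ f x := by
  unfold dmuDensity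
  positivity

theorem dmuDensity_eq_zero_of_eventuallyEq_zero {μ x : ℝ} {f : ℝ → ℝ} (h : f =ᶠ[𝓝 x] 0) :
    dmuDensity μ f x = 0 := by
  rw [dmuDensity, h.deriv.deriv_eq, h.deriv_eq, h.eq_of_nhds]
  simp

theorem dmuDensity_mul_le {μ A x : ℝ} {f ψ : ℝ → ℝ} (hx : 0 < x)
    (hf : ContDiffAt ℝ 2 f x) (hψ : ContDiffAt ℝ 2 ψ x) (h₀ : |ψ x| ≤ A)
    (h₁ : |x * deriv ψ x| ≤ A) (h₂ : |x ^ 2 * deriv (deriv ψ) x| ≤ A) :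
    dmuDensity μ (fun y => f y * ψ y) x ≤ 12 * A ^ 2 *
      (deriv (deriv f) x ^ 2 * x ^ (μ + 1) + deriv f x ^ 2 * (x ^ (μ - 1) + (x + 1) * x ^ μ) +
        f x ^ 2 * (x ^ (μ - 3) + (x + 1) * x ^ (μ - 2) + x ^ (μ - 1))) := by
  have hderiv : deriv (fun y => f y * ψ y) x = deriv f x * ψ x + f x * deriv ψ x :=
    deriv_fun_mul (hf.differentiableAt (by norm_num)) (hψ.differentiableAt (by norm_num))
  obtain ⟨e₂, e₁, e₀, e₄⟩ := rpow_eq_pow_mul_rpow_sub_three hx.ne' μ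
  rw [dmuDensity, deriv_deriv_mul hf hψ, hderiv, e₂, e₁, e₀, e₄]
  have h := mul_le_mul_of_nonneg_right (leibniz_sq_le (a₀ := f x) (a₁ := deriv f x)
    (a₂ := deriv (deriv f) x) hx.le h₀ h₁ h₂) (rpow_nonneg hx.le (μ - 3))
  exact (le_of_eq (by ring)).trans (h.trans_eq (by ring))

section Majorants

variable {μ A M x : ℝ} {f ψ : ℝ → ℝ}

theorem dmuDensity_mul_le_of_one_le (hx : 1 ≤ x) (hf : ContDiffAt ℝ 2 f x)
    (hψ : ContDiffAt ℝ 2 ψ x) (h₀ : |ψ x| ≤ A) (h₁ : |x * deriv ψ x| ≤ A)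
    (h₂ : |x ^ 2 * deriv (deriv ψ) x| ≤ A) :
    dmuDensity μ (fun y => f y * ψ y) x ≤ 48 * A ^ 2 * dmuDensity μ f x := by
  have hx₀ : 0 < x := by linarith
  refine (dmuDensity_mul_le hx₀ hf hψ h₀ h₁ h₂).trans ?_
  rw [show 48 * A ^ 2 * dmuDensity μ f x = 12 * A ^ 2 * (4 * dmuDensity μ f x) by ring]
  refine mul_le_mul_of_nonneg_left ?_ (by positivity : (0 : ℝ) ≤ 12 * A ^ 2)
  obtain ⟨e₂, e₁, e₀, e₄⟩ := rpow_eq_pow_mul_rpow_sub_three hx₀.ne' μ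
  rw [dmuDensity, e₂, e₁, e₀, e₄]
  have hw := rpow_nonneg hx₀.le (μ - 3)
  have h₂ : x ^ 2 * x ^ (μ - 3) ≤ (x + 1) * (x ^ 3 * x ^ (μ - 3)) := by
    have : x ^ 2 ≤ (x + 1) * x ^ 3 := by nlinarith
    nlinarith
  have h₀ : x ^ (μ - 3) + (x + 1) * (x * x ^ (μ - 3)) ≤ 3 * (x ^ 2 * x ^ (μ - 3)) := by
    have : 1 + (x + 1) * x ≤ 3 * x ^ 2 := by nlinarith
    nlinarith
  have : 0 ≤ (x + 1) * (x ^ 3 * x ^ (μ - 3)) := by positivity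
  nlinarith [mul_le_mul_of_nonneg_left h₂ (sq_nonneg (deriv f x)),
    mul_le_mul_of_nonneg_left h₀ (sq_nonneg (f x)),
    mul_nonneg (sq_nonneg (deriv f x)) this,
    mul_nonneg (sq_nonneg (deriv (deriv f) x)) (mul_nonneg (pow_nonneg hx₀.le 4) hw)]

theorem dmuDensity_mul_le_of_le_one (hx₀ : 0 < x) (hx : x ≤ 1) (hf : ContDiffAt ℝ 2 f x)
    (hψ : ContDiffAt ℝ 2 ψ x) (h₀ : |ψ x| ≤ A) (h₁ : |x * deriv ψ x| ≤ A)
    (h₂ : |x ^ 2 * deriv (deriv ψ) x| ≤ A) (hM : |f x| + |deriv f x| ≤ M) :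
    dmuDensity μ (fun y => f y * ψ y) x ≤
      12 * A ^ 2 * (dmuDensity μ f x + 5 * M ^ 2 * x ^ (μ - 3)) := by
  refine (dmuDensity_mul_le hx₀ hf hψ h₀ h₁ h₂).trans
    (mul_le_mul_of_nonneg_left ?_ (by positivity : (0 : ℝ) ≤ 12 * A ^ 2))
  obtain ⟨e₂, e₁, e₀, e₄⟩ := rpow_eq_pow_mul_rpow_sub_three hx₀.ne' μ
  rw [dmuDensity, e₂, e₁, e₀, e₄]
  have hw := rpow_nonneg hx₀.le (μ - 3)
  have hf₀ : |f x| ≤ M := by linarith [abs_nonneg (deriv f x)]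
  have hf₁ : |deriv f x| ≤ M := by linarith [abs_nonneg (f x)]
  have s₀ : f x ^ 2 ≤ M ^ 2 := sq_le_sq' (abs_le.mp hf₀).1 (abs_le.mp hf₀).2
  have s₁ : deriv f x ^ 2 ≤ M ^ 2 := sq_le_sq' (abs_le.mp hf₁).1 (abs_le.mp hf₁).2
  have hx₂ : x ^ 2 ≤ 1 := by nlinarith
  have k₀ : 1 + (x + 1) * x + x ^ 2 ≤ 4 := by nlinarith
  have t₁ : deriv f x ^ 2 * (x ^ 2 * x ^ (μ - 3)) ≤ M ^ 2 * x ^ (μ - 3) := by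
    calc _ = deriv f x ^ 2 * x ^ 2 * x ^ (μ - 3) := by ring
      _ ≤ M ^ 2 * 1 * x ^ (μ - 3) := by gcongr
      _ = _ := by ring
  have t₀ : f x ^ 2 * (x ^ (μ - 3) + (x + 1) * (x * x ^ (μ - 3)) + x ^ 2 * x ^ (μ - 3)) ≤
      4 * M ^ 2 * x ^ (μ - 3) := by
    calc _ = f x ^ 2 * (1 + (x + 1) * x + x ^ 2) * x ^ (μ - 3) := by ring
      _ ≤ M ^ 2 * 4 * x ^ (μ - 3) := by gcongr
      _ = _ := by ring
  nlinarith [mul_nonneg (sq_nonneg (f x)) (mul_nonneg (pow_nonneg hx₀.le 2) hw)]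

end Majorants

def dmuEnergy (μ : ℝ) (f : ℝ → ℝ) : ℝ :=
  (∫ x in Ioi 0, deriv (deriv f) x ^ 2 * x ^ (μ + 1)) +
    (∫ x in Ioi 0, deriv f x ^ 2 * (x + 1) * x ^ μ) + ∫ x in Ioi 0, f x ^ 2 * x ^ (μ - 1)

theorem dmuEnergy_le_setIntegral {μ : ℝ} {u G : ℝ → ℝ} (hu : ContinuousOn u (Ioi 0))
    (hG : IntegrableOn G (Ioi 0)) (hle : ∀ x ∈ Ioi 0, dmuDensity μ u x ≤ G x) :
    dmuEnergy μ u ≤ ∫ x in Ioi 0, G x := by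
  have hpow (c : ℝ) : Measurable fun x : ℝ => x ^ c := by fun_prop
  have hnonneg {F : ℝ → ℝ} (hF : ∀ x ∈ Ioi (0 : ℝ), 0 ≤ F x) :
      ∀ᵐ x ∂(volume.restrict (Ioi 0)), 0 ≤ F x :=
    (ae_restrict_iff' measurableSet_Ioi).mpr (.of_forall hF)
  refine integral_add_add_le_of_le hG
    (((measurable_deriv _).pow_const 2).mul (hpow _)).aestronglyMeasurable
    ((((measurable_deriv _).pow_const 2).mul (by fun_prop)).mul (hpow _)).aestronglyMeasurable
    (((hu.pow 2).aestronglyMeasurable measurableSet_Ioi).mul (hpow _).aestronglyMeasurable)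
    (hnonneg fun x hx => ?_) (hnonneg fun x hx => ?_) (hnonneg fun x hx => ?_)
    ((ae_restrict_iff' measurableSet_Ioi).mpr (.of_forall hle))
  all_goals have : (0 : ℝ) < x := hx
  all_goals positivity

theorem integrableOn_dmuDensity_add_rpow {μ C b : ℝ} {g : ℝ → ℝ} (hμ : 2 < μ)
    (hJ : IntegrableOn (dmuDensity μ g) (Ioi 0)) (hb : 0 ≤ b) :
    IntegrableOn (fun x => dmuDensity μ g x + C * x ^ (μ - 3)) (Ioc 0 b) :=
  (hJ.mono_set Ioc_subset_Ioi_self).add <| Integrable.const_mul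
    ((intervalIntegrable_iff_integrableOn_Ioc_of_le hb).mp
      (intervalIntegral.intervalIntegrable_rpow' (by linarith))) _

section CutoffEstimate

variable {μ A M ε R : ℝ} {g : ℝ → ℝ}

theorem dmuDensity_mul_one_sub_cutoff_le {x : ℝ} (hg : ContDiffOn ℝ 2 g (Ioi 0))
    (hA : |1 - cutoff ε R x| ≤ A ∧ |x * deriv (fun y => 1 - cutoff ε R y) x| ≤ A ∧
      |x ^ 2 * deriv (deriv fun y => 1 - cutoff ε R y) x| ≤ A)
    (hε : 0 < ε) (hε₁ : 2 * ε ≤ 1) (hR : 1 ≤ R)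
    (hM : ∀ x ∈ Ioc 0 (2 * ε), |g x| + |deriv g x| ≤ M) (hx : 0 < x) :
    dmuDensity μ (fun y => g y * (1 - cutoff ε R y)) x ≤
      (Ioc 0 (2 * ε)).indicator
          (fun x => 12 * A ^ 2 * (dmuDensity μ g x + 5 * M ^ 2 * x ^ (μ - 3))) x +
        (Ici R).indicator (fun x => 48 * A ^ 2 * dmuDensity μ g x) x := by
  obtain ⟨h₀, h₁, h₂⟩ := hA
  have hgx := hg.contDiffAt (Ioi_mem_nhds hx)
  have hψ : ContDiffAt ℝ 2 (fun y => 1 - cutoff ε R y) x :=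
    (contDiff_infty.mp (contDiff_const.sub (contDiff_cutoff ε R)) 2).contDiffAt
  have hnear : 0 ≤ (Ioc 0 (2 * ε)).indicator
      (fun x => 12 * A ^ 2 * (dmuDensity μ g x + 5 * M ^ 2 * x ^ (μ - 3))) x :=
    indicator_nonneg (fun y hy => by
      have := dmuDensity_nonneg (μ := μ) g hy.1.le
      have := rpow_nonneg hy.1.le (μ - 3)
      positivity) x
  have hfar : 0 ≤ (Ici R).indicator (fun x => 48 * A ^ 2 * dmuDensity μ g x) x :=
    indicator_nonneg (fun y (hy : R ≤ y) => by
      have := dmuDensity_nonneg (μ := μ) g (show (0 : ℝ) ≤ y by linarith)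
      positivity) x
  rcases le_or_gt x (2 * ε) with hxε | hxε
  · have := dmuDensity_mul_le_of_le_one (μ := μ) hx (by linarith) hgx hψ h₀ h₁ h₂
      (hM x ⟨hx, hxε⟩)
    rw [indicator_of_mem (show x ∈ Ioc 0 (2 * ε) from ⟨hx, hxε⟩)]
    linarith
  rcases le_or_gt R x with hRx | hRx
  · have := dmuDensity_mul_le_of_one_le (μ := μ) (by linarith) hgx hψ h₀ h₁ h₂
    rw [indicator_of_mem (show x ∈ Ici R from hRx) (fun x => 48 * A ^ 2 * dmuDensity μ g x)]
    linarith
  · have hzero : (fun y => g y * (1 - cutoff ε R y)) =ᶠ[𝓝 x] 0 := by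
      filter_upwards [cutoff_eventuallyEq_one hε hxε hRx] with y hy
      simp [hy]
    rw [dmuDensity_eq_zero_of_eventuallyEq_zero hzero]
    linarith

theorem dmuEnergy_mul_one_sub_cutoff_le (hμ : 2 < μ) (hg : ContDiffOn ℝ 2 g (Ioi 0))
    (hJ : IntegrableOn (dmuDensity μ g) (Ioi 0))
    (hA : ∀ x, |1 - cutoff ε R x| ≤ A ∧ |x * deriv (fun y => 1 - cutoff ε R y) x| ≤ A ∧
      |x ^ 2 * deriv (deriv fun y => 1 - cutoff ε R y) x| ≤ A)
    (hε : 0 < ε) (hε₁ : 2 * ε ≤ 1) (hR : 1 ≤ R)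
    (hM : ∀ x ∈ Ioc 0 (2 * ε), |g x| + |deriv g x| ≤ M) :
    dmuEnergy μ (fun y => g y * (1 - cutoff ε R y)) ≤
      12 * A ^ 2 * (∫ x in Ioc 0 (2 * ε), (dmuDensity μ g x + 5 * M ^ 2 * x ^ (μ - 3))) +
        48 * A ^ 2 * ∫ x in Ici R, dmuDensity μ g x := by
  have hnear : Integrable ((Ioc 0 (2 * ε)).indicator
      fun x => 12 * A ^ 2 * (dmuDensity μ g x + 5 * M ^ 2 * x ^ (μ - 3))) :=
    (integrable_indicator_iff measurableSet_Ioc).mpr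
      ((integrableOn_dmuDensity_add_rpow hμ hJ (by linarith)).const_mul _)
  have hfar : Integrable ((Ici R).indicator fun x => 48 * A ^ 2 * dmuDensity μ g x) :=
    (integrable_indicator_iff measurableSet_Ici).mpr
      ((hJ.mono_set (Ici_subset_Ioi.mpr (by linarith))).const_mul _)
  have hu : ContinuousOn (fun y => g y * (1 - cutoff ε R y)) (Ioi 0) :=
    hg.continuousOn.mul (continuous_const.sub (contDiff_cutoff ε R).continuous).continuousOn
  refine (dmuEnergy_le_setIntegral hu (hnear.add hfar).integrableOn fun x hx =>
    dmuDensity_mul_one_sub_cutoff_le hg (hA x) hε hε₁ hR hM hx).trans_eq ?_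
  rw [integral_add' hnear.integrableOn hfar.integrableOn, setIntegral_indicator measurableSet_Ioc,
    setIntegral_indicator measurableSet_Ici, inter_eq_right.mpr Ioc_subset_Ioi_self,
    inter_eq_right.mpr (Ici_subset_Ioi.mpr (by linarith)), integral_const_mul, integral_const_mul]

theorem exists_dmuEnergy_mul_one_sub_cutoff_lt {a₀ δ : ℝ} (hμ : 2 < μ)
    (hg : ContDiffOn ℝ 2 g (Ioi 0)) (hJ : IntegrableOn (dmuDensity μ g) (Ioi 0)) (ha₀ : 0 < a₀)
    (hM : ∀ x ∈ Ioo 0 a₀, |g x| + |deriv g x| ≤ M) (hδ : 0 < δ) :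
    ∃ ε R, 0 < ε ∧ ε ≤ R ∧ dmuEnergy μ (fun y => g y * (1 - cutoff ε R y)) < δ := by
  obtain ⟨A, hA⟩ := exists_cutoff_bound
  have hfar := ((tendsto_setIntegral_Ici_atTop (hJ.mono_set (Ici_subset_Ioi.mpr one_pos))).const_mul
    (48 * A ^ 2)).eventually_lt_const (show 48 * A ^ 2 * 0 < δ / 2 by simpa using hδ)
  obtain ⟨R, hRδ, hR⟩ := (hfar.and (eventually_ge_atTop 1)).exists
  have hnear := ((tendsto_setIntegral_Ioc_nhdsGT_zero one_pos
    (integrableOn_dmuDensity_add_rpow (C := 5 * M ^ 2) hμ hJ zero_le_one)).const_mul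
    (12 * A ^ 2)).eventually_lt_const (show 12 * A ^ 2 * 0 < δ / 2 by simpa using hδ)
  have hsmall : ∀ᶠ a in 𝓝[>] (0 : ℝ), a < a₀ ∧ a ≤ 1 := eventually_nhdsWithin_of_eventually_nhds
    ((eventually_lt_nhds ha₀).and (eventually_le_nhds one_pos))
  obtain ⟨a, haδ, ⟨haa₀, ha₁⟩, ha⟩ := (hnear.and (hsmall.and self_mem_nhdsWithin)).exists
  obtain ⟨ε, rfl⟩ : ∃ ε, a = 2 * ε := ⟨a / 2, by ring⟩
  refine ⟨ε, R, by linarith, by linarith, ?_⟩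
  calc _ ≤ _ := dmuEnergy_mul_one_sub_cutoff_le hμ hg hJ (hA ε R) (by linarith)
        ha₁ hR fun x hx => hM x ⟨hx.1, hx.2.trans_lt haa₀⟩
    _ < δ / 2 + δ / 2 := add_lt_add haδ hRδ
    _ = δ := add_halves δ

end CutoffEstimate

/-- Density of compactly supported smooth functions in the `D_μ`-norm for `μ > 2`. -/
theorem stmt_18 (μ : ℝ) (hμ : 2 < μ)
    (g : ℝ → ℝ) (hg : ContDiffOn ℝ (⊤ : ℕ∞) g (Set.Ioi 0))
    (hB : BoundaryB μ g) (hD : FiniteDmu μ g) :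
    ∀ δ : ℝ, 0 < δ → ∃ h : ℝ → ℝ,
      ContDiff ℝ (⊤ : ℕ∞) h ∧ HasCompactSupport h ∧ tsupport h ⊆ Set.Ioi 0 ∧
      (∫ x in Set.Ioi (0 : ℝ),
          (deriv (deriv (fun y => g y - h y)) x) ^ 2 * x ^ (μ + 1)) +
        (∫ x in Set.Ioi (0 : ℝ),
          (deriv (fun y => g y - h y) x) ^ 2 * (x + 1) * x ^ μ) +
        (∫ x in Set.Ioi (0 : ℝ), (g x - h x) ^ 2 * x ^ (μ - 1)) < δ := by
  intro δ hδ
  obtain ⟨M, hM⟩ := hB.1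
  obtain ⟨a₀, ha₀, hM⟩ := mem_nhdsGT_iff_exists_Ioo_subset.mp hM
  obtain ⟨ε, R, hε, hεR, hlt⟩ := exists_dmuEnergy_mul_one_sub_cutoff_lt hμ
    (contDiffOn_infty.mp hg 2) ((hD.1.add hD.2.1).add hD.2.2) ha₀ hM hδ
  have hsupp : tsupport (cutoff ε R) ⊆ Ioi 0 :=
    (tsupport_cutoff_subset hε hεR).trans fun x hx => hε.trans_le hx.1
  refine ⟨fun y => g y * cutoff ε R y,
    hg.contDiff_mul_of_tsupport_subset isOpen_Ioi (contDiff_cutoff ε R) hsupp,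
    HasCompactSupport.mul_left (f := g) (isCompact_Icc.of_isClosed_subset (isClosed_tsupport _)
      (tsupport_cutoff_subset hε hεR)),
    tsupport_mul_subset_right.trans hsupp, ?_⟩
  show dmuEnergy μ (fun y => g y - g y * cutoff ε R y) < δ
  rwa [show (fun y => g y - g y * cutoff ε R y) = fun y => g y * (1 - cutoff ε R y) by ext; ring]
end
end

section
/- Let g ∈ C_c^∞((0,∞)) (smooth and compactly supported in (0,∞)), let λ, β ∈ ℝ, and write ∂h for the function x ↦ x·h'(x). Then ∫₀^∞ (∂²(x^λ g))² x^{β−1} dx = ∫₀^∞ ( λ²(λ+β)² g² − 2λ(λ+β)(∂g)² + (∂²g)² ) x^{2λ+β−1} dx, where x^λ g denotes the function x ↦ x^λ g(x) and ∂² means ∂ applied twice. -/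
/-!
On `(0, ∞)` one has `∂(x^λ g) = x^λ (λ g + ∂g)`, hence `∂²(x^λ g) = x^λ (λ² g + 2λ ∂g + ∂²g)`,
and the left integrand is `(λ² g + 2λ ∂g + ∂²g)² x^{s-1}` with `s = 2λ + β`. For compactly
supported `h`, `(∂h + s h) x^{s-1}` is the derivative of `h x^s`, so its integral vanishes.
With the potential `P = -λ²β g² + 2λ² g ∂g + 2λ (∂g)²`, adding `(∂P + s P) x^{s-1}` to the
right integrand gives the left one pointwise.
-/

open MeasureTheory

noncomputable section

/-- The operator `∂h(x) = x · h'(x)`. -/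
def Dop (h : ℝ → ℝ) : ℝ → ℝ := fun x => x * deriv h x

open Set Filter Topology

theorem ContDiff.Dop {n : WithTop ℕ∞} {h : ℝ → ℝ} (hh : ContDiff ℝ (n + 1) h) :
    ContDiff ℝ n (Dop h) :=
  contDiff_id.mul hh.deriv'

theorem support_Dop_subset (h : ℝ → ℝ) : Function.support (Dop h) ⊆ tsupport h :=
  (Function.support_mul_subset_right _ _).trans support_deriv_subset

theorem tsupport_Dop_subset (h : ℝ → ℝ) : tsupport (Dop h) ⊆ tsupport h :=
  closure_minimal (support_Dop_subset h) (isClosed_tsupport h)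

theorem Dop_eq_zero_of_notMem_tsupport {h : ℝ → ℝ} {x : ℝ} (hx : x ∉ tsupport h) :
    Dop h x = 0 :=
  Function.notMem_support.mp fun hx' => hx (support_Dop_subset h hx')

theorem Dop_apply (h : ℝ → ℝ) (x : ℝ) : Dop h x = x * deriv h x := rfl

theorem Dop_eq_of_hasDerivAt {f : ℝ → ℝ} {f' x : ℝ} (hf : HasDerivAt f f' x) :
    Dop f x = x * f' := by
  rw [Dop, hf.deriv]

theorem Filter.EventuallyEq.Dop_eq {f f' : ℝ → ℝ} {x : ℝ} (h : f =ᶠ[𝓝 x] f') :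
    Dop f x = Dop f' x := by
  rw [Dop, Dop, h.deriv_eq]

theorem Dop_rpow_mul {g : ℝ → ℝ} (hg : Differentiable ℝ g) (lam : ℝ) {x : ℝ}
    (hx : 0 < x) :
    Dop (fun y => y ^ lam * g y) x = x ^ lam * (lam * g x + Dop g x) := by
  have hpow : x ^ lam = x * x ^ (lam - 1) := by
    conv_lhs => rw [show lam = 1 + (lam - 1) by ring, Real.rpow_add hx, Real.rpow_one]
  rw [Dop_eq_of_hasDerivAt (f := fun y => y ^ lam * g y)
    ((Real.hasDerivAt_rpow_const (Or.inl hx.ne')).mul (hg x).hasDerivAt), Dop_apply, hpow]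
  ring

theorem Dop_Dop_rpow_mul {g : ℝ → ℝ} (hg : ContDiff ℝ 2 g) (lam : ℝ) {x : ℝ}
    (hx : 0 < x) :
    Dop (Dop fun y => y ^ lam * g y) x
      = x ^ lam * (lam ^ 2 * g x + 2 * lam * Dop g x + Dop (Dop g) x) := by
  have hg1 : Differentiable ℝ g := hg.differentiable two_ne_zero
  have hDg : Differentiable ℝ (Dop g) := (ContDiff.Dop (n := 1) hg).differentiable one_ne_zero
  have hlin : Dop (fun y => lam * g y + Dop g y) x = lam * Dop g x + Dop (Dop g) x := by
    rw [Dop_eq_of_hasDerivAt (f := fun y => lam * g y + Dop g y)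
      (((hg1 x).hasDerivAt.const_mul lam).add (hDg x).hasDerivAt), Dop_apply, Dop_apply]
    ring
  rw [(eventuallyEq_of_mem (Ioi_mem_nhds hx) fun y hy => Dop_rpow_mul hg1 lam hy).Dop_eq,
    Dop_rpow_mul (g := fun y => lam * g y + Dop g y) ((hg1.const_mul lam).add hDg) lam hx,
    hlin]
  ring

section WeightedIntegrals

variable {K : Set ℝ}

theorem integrableOn_Ioi_mul_rpow {φ : ℝ → ℝ} (hφ : Continuous φ) (hK : IsCompact K)
    (hK0 : K ⊆ Ioi 0) (hφK : ∀ x ∉ K, φ x = 0) (r : ℝ) :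
    IntegrableOn (fun x => φ x * x ^ r) (Ioi 0) := by
  have hvan : ∀ x ∉ K, φ x * x ^ r = 0 := fun x hx => by rw [hφK x hx, zero_mul]
  have hcont : Continuous fun x => φ x * x ^ r := by
    refine ContinuousOn.continuous_of_tsupport_subset ?_ (isOpen_Ioi (a := 0)) ?_
    · exact hφ.continuousOn.mul fun x (hx : 0 < x) =>
        (Real.continuousAt_rpow_const x r (Or.inl hx.ne')).continuousWithinAt
    · exact (closure_minimal (Function.support_subset_iff'.mpr hvan) hK.isClosed).trans hK0
  exact (hcont.integrable_of_hasCompactSupport (HasCompactSupport.intro hK hvan)).integrableOn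

theorem integrableOn_Ioi_Dop_add_mul_rpow {h : ℝ → ℝ} (hh : ContDiff ℝ 1 h)
    (hK : IsCompact K) (hK0 : K ⊆ Ioi 0) (hhK : ∀ x ∉ K, h x = 0) (s : ℝ) :
    IntegrableOn (fun x => (Dop h x + s * h x) * x ^ (s - 1)) (Ioi 0) := by
  have htsupp : tsupport h ⊆ K :=
    closure_minimal (Function.support_subset_iff'.mpr hhK) hK.isClosed
  refine integrableOn_Ioi_mul_rpow (by unfold Dop; fun_prop) hK hK0 (fun x hx => ?_) _
  rw [Dop_eq_zero_of_notMem_tsupport (fun hx' => hx (htsupp hx')), hhK x hx]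
  ring

theorem integral_Ioi_Dop_add_mul_rpow {h : ℝ → ℝ} (hh : ContDiff ℝ 1 h)
    (hK : IsCompact K) (hK0 : K ⊆ Ioi 0) (hhK : ∀ x ∉ K, h x = 0) (s : ℝ) :
    ∫ x in Ioi 0, (Dop h x + s * h x) * x ^ (s - 1) = 0 := by
  have h0K : (0 : ℝ) ∉ K := fun h0K => lt_irrefl (0 : ℝ) (hK0 h0K)
  have hnear0 : (fun x => h x * x ^ s) =ᶠ[𝓝 0] fun _ => 0 := by
    have htsupp : tsupport h ⊆ K :=
      closure_minimal (Function.support_subset_iff'.mpr hhK) hK.isClosed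
    filter_upwards [notMem_tsupport_iff_eventuallyEq.mp fun h0' => h0K (htsupp h0')] with x hx
    rw [hx, Pi.zero_apply, zero_mul]
  have hderiv : ∀ x ∈ Ioi (0 : ℝ),
      HasDerivAt (fun x => h x * x ^ s) ((Dop h x + s * h x) * x ^ (s - 1)) x := by
    intro x (hx : 0 < x)
    have hpow : x ^ s = x * x ^ (s - 1) := by
      conv_lhs => rw [show s = 1 + (s - 1) by ring, Real.rpow_add hx, Real.rpow_one]
    refine ((hh.differentiable one_ne_zero x).hasDerivAt.mul
      (Real.hasDerivAt_rpow_const (p := s) (Or.inl hx.ne'))).congr_deriv ?_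
    rw [Dop_apply, hpow]; ring
  have hatTop : Tendsto (fun x => h x * x ^ s) atTop (𝓝 0) := by
    obtain ⟨M, hM⟩ := hK.bddAbove
    refine tendsto_const_nhds.congr' ?_
    filter_upwards [eventually_gt_atTop M] with x hx
    rw [hhK x fun hxK => (hM hxK).not_gt hx, zero_mul]
  rw [integral_Ioi_of_hasDerivAt_of_tendsto
    (continuousAt_const.congr hnear0.symm).continuousWithinAt hderiv
    (integrableOn_Ioi_Dop_add_mul_rpow hh hK hK0 hhK s) hatTop, hhK 0 h0K, zero_mul, sub_zero]

end WeightedIntegrals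

def potential (g : ℝ → ℝ) (lam β : ℝ) : ℝ → ℝ := fun x =>
  -lam ^ 2 * β * g x ^ 2 + 2 * lam ^ 2 * (g x * Dop g x) + 2 * lam * Dop g x ^ 2

section Potential

variable {g : ℝ → ℝ} (lam β : ℝ)

theorem contDiff_potential (hg : ContDiff ℝ 2 g) : ContDiff ℝ 1 (potential g lam β) := by
  have hg1 : ContDiff ℝ 1 g := hg.of_le one_le_two
  have hDg : ContDiff ℝ 1 (Dop g) := ContDiff.Dop (n := 1) hg
  unfold potential
  fun_prop

theorem Dop_potential (hg : ContDiff ℝ 2 g) (x : ℝ) :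
    Dop (potential g lam β) x = -2 * lam ^ 2 * β * g x * Dop g x
      + 2 * lam ^ 2 * (Dop g x ^ 2 + g x * Dop (Dop g) x) + 4 * lam * Dop g x * Dop (Dop g) x := by
  have hgx := (hg.differentiable two_ne_zero x).hasDerivAt
  have hDgx := ((ContDiff.Dop (n := 1) hg).differentiable one_ne_zero x).hasDerivAt
  rw [Dop_eq_of_hasDerivAt (f := potential g lam β)
    ((((hgx.pow 2).const_mul (-lam ^ 2 * β)).add ((hgx.mul hDgx).const_mul (2 * lam ^ 2))).add
      ((hDgx.pow 2).const_mul (2 * lam))), Dop_apply, Dop_apply]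
  ring

theorem sq_Dop_Dop_rpow_mul_mul_rpow (hg : ContDiff ℝ 2 g) {x : ℝ} (hx : 0 < x) :
    (Dop (Dop (fun y => y ^ lam * g y)) x) ^ 2 * x ^ (β - 1) =
      (lam ^ 2 * (lam + β) ^ 2 * (g x) ^ 2 -
        2 * lam * (lam + β) * (Dop g x) ^ 2 + (Dop (Dop g) x) ^ 2) * x ^ (2 * lam + β - 1)
      + (Dop (potential g lam β) x + (2 * lam + β) * potential g lam β x)
        * x ^ (2 * lam + β - 1) := by
  have hweight : (x ^ lam) ^ 2 * x ^ (β - 1) = x ^ (2 * lam + β - 1) := by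
    rw [← Real.rpow_natCast, ← Real.rpow_mul hx.le, ← Real.rpow_add hx]
    ring_nf
  rw [Dop_Dop_rpow_mul hg lam hx, Dop_potential lam β hg]
  unfold potential
  linear_combination (lam ^ 2 * g x + 2 * lam * Dop g x + Dop (Dop g) x) ^ 2 * hweight

end Potential

/-- Integration-by-parts identity for the transformation `g ↦ x^λ g`:
`∫₀^∞ (∂²(x^λ g))² x^{β−1} dx
  = ∫₀^∞ (λ²(λ+β)² g² − 2λ(λ+β)(∂g)² + (∂²g)²) x^{2λ+β−1} dx`. -/
theorem stmt_19 (g : ℝ → ℝ) (hg : ContDiff ℝ (⊤ : ℕ∞) g)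
    (hsupp : HasCompactSupport g) (hsub : tsupport g ⊆ Set.Ioi 0)
    (lam β : ℝ) :
    (∫ x in Set.Ioi (0 : ℝ),
        (Dop (Dop (fun y => y ^ lam * g y)) x) ^ 2 * x ^ (β - 1)) =
      ∫ x in Set.Ioi (0 : ℝ),
        (lam ^ 2 * (lam + β) ^ 2 * (g x) ^ 2 -
          2 * lam * (lam + β) * (Dop g x) ^ 2 + (Dop (Dop g) x) ^ 2) *
          x ^ (2 * lam + β - 1) := by
  have hg2 : ContDiff ℝ 2 g := hg.of_le (by norm_cast)
  have hK := hsupp.isCompact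
  have hvanish : ∀ x ∉ tsupport g, g x = 0 ∧ Dop g x = 0 ∧ Dop (Dop g) x = 0 := fun x hx =>
    ⟨image_eq_zero_of_notMem_tsupport hx, Dop_eq_zero_of_notMem_tsupport hx,
      Dop_eq_zero_of_notMem_tsupport fun hx' => hx (tsupport_Dop_subset g hx')⟩
  have hPK : ∀ x ∉ tsupport g, potential g lam β x = 0 := fun x hx => by
    simp [potential, hvanish x hx]
  have hRint : IntegrableOn (fun x => (lam ^ 2 * (lam + β) ^ 2 * (g x) ^ 2 -
      2 * lam * (lam + β) * (Dop g x) ^ 2 + (Dop (Dop g) x) ^ 2) * x ^ (2 * lam + β - 1))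
      (Ioi 0) := by
    have hDg : ContDiff ℝ 1 (Dop g) := ContDiff.Dop (n := 1) hg2
    have hDDg : ContDiff ℝ 0 (Dop (Dop g)) := ContDiff.Dop (n := 0) hDg
    exact integrableOn_Ioi_mul_rpow (by fun_prop) hK hsub
      (fun x hx => by simp [hvanish x hx]) _
  have hP := contDiff_potential lam β hg2
  rw [setIntegral_congr_fun measurableSet_Ioi fun x hx =>
      sq_Dop_Dop_rpow_mul_mul_rpow lam β hg2 hx,
    integral_add hRint (integrableOn_Ioi_Dop_add_mul_rpow hP hK hsub hPK _),
    integral_Ioi_Dop_add_mul_rpow hP hK hsub hPK, add_zero]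
end
end
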